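/- arXiv:math/0112222 — 7 statements merged into one kernel-verified Lean document; each statement's English description precedes it below -/
import Mathlib

section
/- Let r, s ∈ ℝ with r < 0 and s < 0. If (u_ε)_{ε∈(0,1]} and (v_ε)_{ε∈(0,1]} are families of smooth functions on ℝⁿ satisfying the global Zygmund estimates of order r and of order s respectively, then the family of pointwise products (u_ε · v_ε)_{ε∈(0,1]} satisfies the global Zygmund estimates of order r + s. -/
open MeasureTheory SchwartzMap Filter
open scoped FourierTransform Topology

noncomputable section

/-- `i`-th partial derivative of a function on `ℝⁿ`. -/
def pdE {n : ℕ} (i : Fin n) (f : EuclideanSpace ℝ (Fin n) → ℂ) :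
    EuclideanSpace ℝ (Fin n) → ℂ :=
  fun x => fderiv ℝ f x (EuclideanSpace.single i 1)

/-- The iterated partial derivative `∂^α` along the multi-index `α`. -/
def mderiv {n : ℕ} (α : Fin n → ℕ) (f : EuclideanSpace ℝ (Fin n) → ℂ) :
    EuclideanSpace ℝ (Fin n) → ℂ :=
  (List.finRange n).foldr (fun i g => (pdE i)^[α i] g) f

/-- A family `(u_ε)` of functions on `ℝⁿ` satisfies the global Zygmund estimates of
order `s` : as `ε → 0⁺`, `sup_x ‖∂^α u_ε x‖` is `O(1)` for `|α| < s`, `O(log(1/ε))` for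
`|α| = s` and `O(ε^{s-|α|})` for `|α| > s`. -/
def ZygGlobal {n : ℕ} (s : ℝ) (u : ℝ → EuclideanSpace ℝ (Fin n) → ℂ) : Prop :=
  ∀ α : Fin n → ℕ,
    (((∑ i, α i : ℕ) : ℝ) < s →
      ∃ C, ∀ᶠ ε in 𝓝[>] (0:ℝ), ∀ x, ‖mderiv α (u ε) x‖ ≤ C) ∧
    ((((∑ i, α i : ℕ) : ℝ) = s →
      ∃ C, ∀ᶠ ε in 𝓝[>] (0:ℝ), ∀ x, ‖mderiv α (u ε) x‖ ≤ C * Real.log (1/ε))) ∧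
    (s < ((∑ i, α i : ℕ) : ℝ) →
      ∃ C, ∀ᶠ ε in 𝓝[>] (0:ℝ), ∀ x, ‖mderiv α (u ε) x‖ ≤ C * ε ^ (s - (∑ i, α i : ℕ)))


lemma pdE_contDiff {n : ℕ} {f : EuclideanSpace ℝ (Fin n) → ℂ}
    (hf : ContDiff ℝ (⊤ : ℕ∞) f) (i : Fin n) : ContDiff ℝ (⊤ : ℕ∞) (pdE i f) :=
  (hf.fderiv_right (m := (⊤ : ℕ∞)) (by simp)).clm_apply contDiff_const

lemma pdE_iter_contDiff {n : ℕ} {f : EuclideanSpace ℝ (Fin n) → ℂ}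
    (hf : ContDiff ℝ (⊤ : ℕ∞) f) (i : Fin n) (j : ℕ) : ContDiff ℝ (⊤ : ℕ∞) ((pdE i)^[j] f) := by
  induction j with
  | zero => exact hf
  | succ j ih => rw [Function.iterate_succ_apply']; exact pdE_contDiff ih i

lemma pdE_mul {n : ℕ} {f g : EuclideanSpace ℝ (Fin n) → ℂ}
    (hf : ContDiff ℝ (⊤ : ℕ∞) f) (hg : ContDiff ℝ (⊤ : ℕ∞) g) (i : Fin n) :
    pdE i (fun y => f y * g y) = fun x => pdE i f x * g x + f x * pdE i g x := by
  funext x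
  unfold pdE
  rw [fderiv_fun_mul ((hf.differentiable (by simp)).differentiableAt)
    ((hg.differentiable (by simp)).differentiableAt)]
  simp [smul_eq_mul]
  ring

lemma pdE_sum {n : ℕ} {ι : Type*} [Fintype ι] (F : ι → EuclideanSpace ℝ (Fin n) → ℂ)
    (hF : ∀ k, ContDiff ℝ (⊤ : ℕ∞) (F k)) (i : Fin n) :
    pdE i (fun y => ∑ k, F k y) = fun x => ∑ k, pdE i (F k) x := by
  funext x
  unfold pdE
  rw [fderiv_fun_sum (fun k _ => ((hF k).differentiable (by simp)).differentiableAt)]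
  simp
lemma pdE_iter_sum {n : ℕ} {ι : Type} [Fintype ι] (F : ι → EuclideanSpace ℝ (Fin n) → ℂ)
    (hF : ∀ k, ContDiff ℝ (⊤ : ℕ∞) (F k)) (i : Fin n) (j : ℕ) :
    (pdE i)^[j] (fun y => ∑ k, F k y) = fun x => ∑ k, (pdE i)^[j] (F k) x := by
  induction j with
  | zero => simp
  | succ j ih =>
      rw [Function.iterate_succ_apply', ih,
        pdE_sum (fun k => (pdE i)^[j] (F k)) (fun k => pdE_iter_contDiff (hF k) i j) i]
      funext x
      simp [Function.iterate_succ_apply']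

lemma iterRep {n : ℕ} (i : Fin n) (j : ℕ) :
    ∃ (ι : Type) (_ : Fintype ι) (a b : ι → ℕ),
      (∀ k, a k + b k = j) ∧
      ∀ (A B : EuclideanSpace ℝ (Fin n) → ℂ), ContDiff ℝ (⊤ : ℕ∞) A → ContDiff ℝ (⊤ : ℕ∞) B →
        (pdE i)^[j] (fun y => A y * B y)
          = fun x => ∑ k, (pdE i)^[a k] A x * (pdE i)^[b k] B x := by
  induction j with
  | zero =>
      exact ⟨Unit, inferInstance, fun _ => 0, fun _ => 0, fun _ => rfl,
        fun A B _ _ => by funext x; simp⟩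
  | succ j ih =>
      obtain ⟨ι, ft, a, b, hab, heq⟩ := ih
      refine ⟨ι × Bool, @instFintypeProd ι Bool ft _,
        fun k => if k.2 then a k.1 + 1 else a k.1,
        fun k => if k.2 then b k.1 else b k.1 + 1, ?_, ?_⟩
      · rintro ⟨k, b'⟩; have := hab k; cases b' <;> simp <;> omega
      · intro A B hA hB
        rw [Function.iterate_succ_apply', heq A B hA hB,
          pdE_sum (fun k => fun x => (pdE i)^[a k] A x * (pdE i)^[b k] B x)
            (fun k => (pdE_iter_contDiff hA i (a k)).mul (pdE_iter_contDiff hB i (b k))) i]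
        funext x
        have : ∀ k : ι, pdE i (fun x => (pdE i)^[a k] A x * (pdE i)^[b k] B x) x
            = (pdE i)^[a k + 1] A x * (pdE i)^[b k] B x
              + (pdE i)^[a k] A x * (pdE i)^[b k + 1] B x := by
          intro k
          rw [pdE_mul (pdE_iter_contDiff hA i (a k)) (pdE_iter_contDiff hB i (b k)) i]
          simp [Function.iterate_succ_apply']
        simp only [this]
        rw [Fintype.sum_prod_type]
        simp [Fintype.sum_bool, Function.iterate_succ_apply', add_comm]
/-- foldr of iterated partials along a list. -/
def mdl {n : ℕ} (l : List (Fin n)) (α : Fin n → ℕ) (f : EuclideanSpace ℝ (Fin n) → ℂ) :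
    EuclideanSpace ℝ (Fin n) → ℂ :=
  l.foldr (fun i g => (pdE i)^[α i] g) f

lemma mdl_congr {n : ℕ} {l : List (Fin n)} {α α' : Fin n → ℕ}
    (h : ∀ i ∈ l, α i = α' i) (f : EuclideanSpace ℝ (Fin n) → ℂ) :
    mdl l α f = mdl l α' f := by
  induction l with
  | nil => rfl
  | cons i l ih =>
      show (pdE i)^[α i] (mdl l α f) = (pdE i)^[α' i] (mdl l α' f)
      rw [h i (List.mem_cons_self (a := i) (l := l)), ih (fun j hj => h j (List.mem_cons_of_mem i hj))]

lemma mdl_contDiff {n : ℕ} {f : EuclideanSpace ℝ (Fin n) → ℂ} (hf : ContDiff ℝ (⊤ : ℕ∞) f)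
    (l : List (Fin n)) (α : Fin n → ℕ) : ContDiff ℝ (⊤ : ℕ∞) (mdl l α f) := by
  induction l with
  | nil => exact hf
  | cons i l ih => exact pdE_iter_contDiff ih i (α i)

lemma mdRep {n : ℕ} (l : List (Fin n)) (hl : l.Nodup) (α : Fin n → ℕ) :
    ∃ (ι : Type) (_ : Fintype ι) (β γ : ι → Fin n → ℕ),
      (∀ k, (∀ i, i ∉ l → β k i = 0 ∧ γ k i = 0) ∧
        (∑ i, β k i) + (∑ i, γ k i) = (l.map α).sum) ∧
      ∀ (f g : EuclideanSpace ℝ (Fin n) → ℂ), ContDiff ℝ (⊤ : ℕ∞) f → ContDiff ℝ (⊤ : ℕ∞) g →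
        mdl l α (fun y => f y * g y)
          = fun x => ∑ k, mdl l (β k) f x * mdl l (γ k) g x := by
  induction l with
  | nil =>
      refine ⟨Unit, inferInstance, fun _ => 0, fun _ => 0,
        fun _ => ⟨fun _ _ => ⟨rfl, rfl⟩, by simp⟩, fun f g _ _ => by funext x; simp [mdl]⟩
  | cons i l ih =>
      rw [List.nodup_cons] at hl
      obtain ⟨ι, ft, β, γ, hcond, heq⟩ := ih hl.2
      obtain ⟨κ, ftk, a, b, hab, hiter⟩ := iterRep i (α i)
      letI := ft; letI := ftk
      refine ⟨ι × κ, inferInstance,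
        fun k => Function.update (β k.1) i (a k.2),
        fun k => Function.update (γ k.1) i (b k.2), ?_, ?_⟩
      · rintro ⟨k, m⟩
        constructor
        · intro j hj
          have hji : j ≠ i := fun h => hj (h ▸ List.mem_cons_self (a := i) (l := l))
          have hjl : j ∉ l := fun h => hj (List.mem_cons_of_mem i h)
          simp [Function.update_of_ne hji, (hcond k).1 j hjl]
        · have hβ0 : β k i = 0 := ((hcond k).1 i hl.1).1
          have hγ0 : γ k i = 0 := ((hcond k).1 i hl.1).2
          have h1 : ∀ j, Function.update (β k) i (a m) j = β k j + if j = i then a m else 0 := by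
            intro j
            rcases eq_or_ne j i with h | h
            · subst h; simp [hβ0]
            · simp [Function.update_of_ne h, h]
          have h2 : ∀ j, Function.update (γ k) i (b m) j = γ k j + if j = i then b m else 0 := by
            intro j
            rcases eq_or_ne j i with h | h
            · subst h; simp [hγ0]
            · simp [Function.update_of_ne h, h]
          simp only [h1, h2, Finset.sum_add_distrib, Finset.sum_ite_eq' Finset.univ i,
            Finset.mem_univ, if_true, List.map_cons, List.sum_cons]
          have := (hcond k).2
          have := hab m
          omega
      · intro f g hf hg
        show (pdE i)^[α i] (mdl l α (fun y => f y * g y)) = _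
        rw [heq f g hf hg,
          pdE_iter_sum (fun k => fun x => mdl l (β k) f x * mdl l (γ k) g x)
            (fun k => (mdl_contDiff hf l (β k)).mul (mdl_contDiff hg l (γ k))) i (α i)]
        funext x
        rw [Fintype.sum_prod_type]
        refine Finset.sum_congr rfl (fun k _ => ?_)
        have h1 : ((pdE i)^[α i] fun y => mdl l (β k) f y * mdl l (γ k) g y)
            = fun x => ∑ m, (pdE i)^[a m] (mdl l (β k) f) x * (pdE i)^[b m] (mdl l (γ k) g) x :=
          hiter _ _ (mdl_contDiff hf l (β k)) (mdl_contDiff hg l (γ k))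
        have h2 : ∀ m, mdl (i :: l) (Function.update (β k) i (a m)) f
            = (pdE i)^[a m] (mdl l (β k) f) := by
          intro m
          show (pdE i)^[Function.update (β k) i (a m) i] (mdl l (Function.update (β k) i (a m)) f) = _
          rw [Function.update_self,
            mdl_congr (fun j hj => Function.update_of_ne (by rintro rfl; exact hl.1 hj) _ _) f]
        have h3 : ∀ m, mdl (i :: l) (Function.update (γ k) i (b m)) g
            = (pdE i)^[b m] (mdl l (γ k) g) := by
          intro m
          show (pdE i)^[Function.update (γ k) i (b m) i] (mdl l (Function.update (γ k) i (b m)) g) = _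
          rw [Function.update_self,
            mdl_congr (fun j hj => Function.update_of_ne (by rintro rfl; exact hl.1 hj) _ _) g]
        have : ((pdE i)^[α i] fun y => mdl l (β k) f y * mdl l (γ k) g y) x
            = ∑ m, (pdE i)^[a m] (mdl l (β k) f) x * (pdE i)^[b m] (mdl l (γ k) g) x :=
          congrFun h1 x
        rw [this]
        refine Finset.sum_congr rfl (fun m _ => ?_)
        rw [h2 m, h3 m]

/-- products, the case `r < 0`, `s < 0`. -/
theorem zygGlobal_mul_neg {n : ℕ} (r s : ℝ) (hr : r < 0) (hs : s < 0)
    (u v : ℝ → EuclideanSpace ℝ (Fin n) → ℂ)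
    (husmooth : ∀ ε ∈ Set.Ioc (0:ℝ) 1, ContDiff ℝ (⊤ : ℕ∞) (u ε))
    (hvsmooth : ∀ ε ∈ Set.Ioc (0:ℝ) 1, ContDiff ℝ (⊤ : ℕ∞) (v ε))
    (hu : ZygGlobal r u) (hv : ZygGlobal s v) :
    ZygGlobal (r + s) (fun ε x => u ε x * v ε x) := by
  intro α
  have hα0 : (0:ℝ) ≤ ((∑ i, α i : ℕ) : ℝ) := Nat.cast_nonneg _
  refine ⟨fun h => absurd h (by linarith), fun h => absurd h (by linarith), fun _ => ?_⟩
  obtain ⟨ι, ft, β, γ, hcond, heq⟩ := mdRep (List.finRange n) (List.nodup_finRange n) α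
  letI := ft
  have hsumβγ : ∀ k, (∑ i, β k i) + (∑ i, γ k i) = ∑ i, α i := by
    intro k
    rw [(hcond k).2, ← Fin.sum_univ_def]
  choose Cu hCu using fun k : ι =>
    (hu (β k)).2.2 (lt_of_lt_of_le hr (Nat.cast_nonneg _))
  choose Cv hCv using fun k : ι =>
    (hv (γ k)).2.2 (lt_of_lt_of_le hs (Nat.cast_nonneg _))
  refine ⟨∑ k, Cu k * Cv k, ?_⟩
  have hmem : ∀ᶠ ε in 𝓝[>] (0:ℝ), ε ∈ Set.Ioc (0:ℝ) 1 := by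
    have h1 : ∀ᶠ ε in 𝓝[>] (0:ℝ), ε ∈ Set.Ioi (0:ℝ) := eventually_mem_nhdsWithin
    have h2 : ∀ᶠ ε in 𝓝[>] (0:ℝ), ε < 1 :=
      Filter.Eventually.filter_mono nhdsWithin_le_nhds (eventually_lt_nhds one_pos)
    filter_upwards [h1, h2] with ε hε h1' using ⟨hε, h1'.le⟩
  filter_upwards [hmem, (eventually_all.mpr hCu), (eventually_all.mpr hCv)]
    with ε hε hCu' hCv'
  intro x
  have hεpos : 0 < ε := hε.1
  have hmd : mderiv α (fun y => u ε y * v ε y)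
      = fun x => ∑ k, mdl (List.finRange n) (β k) (u ε) x * mdl (List.finRange n) (γ k) (v ε) x :=
    heq (u ε) (v ε) (husmooth ε hε) (hvsmooth ε hε)
  show ‖mderiv α (fun y => u ε y * v ε y) x‖ ≤ _
  rw [hmd]
  calc ‖∑ k, mdl (List.finRange n) (β k) (u ε) x * mdl (List.finRange n) (γ k) (v ε) x‖
      ≤ ∑ k, ‖mdl (List.finRange n) (β k) (u ε) x‖ * ‖mdl (List.finRange n) (γ k) (v ε) x‖ := by
        refine (norm_sum_le _ _).trans (le_of_eq ?_)
        exact Finset.sum_congr rfl fun k _ => norm_mul _ _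
    _ ≤ ∑ k, (Cu k * Cv k) * ε ^ (r + s - (∑ i, α i : ℕ)) := by
        refine Finset.sum_le_sum (fun k _ => ?_)
        have hu' := hCu' k x
        have hv' := hCv' k x
        have h1 : 0 ≤ Cu k * ε ^ (r - (∑ i, β k i : ℕ)) := le_trans (norm_nonneg _) hu'
        refine (mul_le_mul hu' hv' (norm_nonneg _) h1).trans (le_of_eq ?_)
        have hc : ((∑ i, β k i : ℕ) : ℝ) + ((∑ i, γ k i : ℕ) : ℝ) = ((∑ i, α i : ℕ) : ℝ) := by
          exact_mod_cast congrArg (Nat.cast (R := ℝ)) (hsumβγ k)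
        have hexp : r - ((∑ i, β k i : ℕ) : ℝ) + (s - ((∑ i, γ k i : ℕ) : ℝ))
            = r + s - ((∑ i, α i : ℕ) : ℝ) := by linarith
        rw [mul_mul_mul_comm, ← Real.rpow_add hεpos, hexp]
    _ = (∑ k, Cu k * Cv k) * ε ^ (r + s - (∑ i, α i : ℕ)) := by rw [Finset.sum_mul]
end
end

section
/- Let r, s ∈ ℝ with max(r,s) > 0. If (u_ε)_{ε∈(0,1]} and (v_ε)_{ε∈(0,1]} are families of smooth functions on ℝⁿ satisfying the global Zygmund estimates of order r and of order s respectively, then the family of pointwise products (u_ε · v_ε)_{ε∈(0,1]} satisfies the global Zygmund estimates of order min(r,s). -/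
open MeasureTheory SchwartzMap Filter
open scoped FourierTransform Topology

noncomputable section

namespace ZygAux

variable {n : ℕ}

/-- Iterated partial derivative along a list of directions. -/
def PD (L : List (Fin n)) (f : EuclideanSpace ℝ (Fin n) → ℂ) :
    EuclideanSpace ℝ (Fin n) → ℂ :=
  L.foldr (fun i g => pdE i g) f

lemma PD_nil (f : EuclideanSpace ℝ (Fin n) → ℂ) : PD [] f = f := rfl

lemma PD_cons (i : Fin n) (L : List (Fin n)) (f : EuclideanSpace ℝ (Fin n) → ℂ) :
    PD (i :: L) f = pdE i (PD L f) := rfl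

lemma PD_append (L₁ L₂ : List (Fin n)) (f : EuclideanSpace ℝ (Fin n) → ℂ) :
    PD (L₁ ++ L₂) f = PD L₁ (PD L₂ f) :=
  List.foldr_append ..

lemma PD_replicate (k : ℕ) (i : Fin n) (f : EuclideanSpace ℝ (Fin n) → ℂ) :
    PD (List.replicate k i) f = (pdE i)^[k] f := by
  induction k with
  | zero => rfl
  | succ k ih =>
    rw [List.replicate_succ, PD_cons, ih, Function.iterate_succ_apply']

/-- Canonical (sorted) list representing a multi-index. -/
def canon (α : Fin n → ℕ) : List (Fin n) :=
  (List.finRange n).flatMap fun i => List.replicate (α i) i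

lemma mderiv_eq_PD (α : Fin n → ℕ) (f : EuclideanSpace ℝ (Fin n) → ℂ) :
    mderiv α f = PD (canon α) f := by
  suffices h : ∀ L : List (Fin n),
      L.foldr (fun i g => (pdE i)^[α i] g) f
        = PD (L.flatMap fun i => List.replicate (α i) i) f by
    exact h _
  intro L
  induction L with
  | nil => rfl
  | cons i L ih =>
    rw [List.foldr_cons, List.flatMap_cons, PD_append, PD_replicate, ih]

lemma contDiff_pdE {f : EuclideanSpace ℝ (Fin n) → ℂ} (hf : ContDiff ℝ (⊤ : ℕ∞) f) (i : Fin n) :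
    ContDiff ℝ (⊤ : ℕ∞) (pdE i f) :=
  (hf.fderiv_right (by simp)).clm_apply contDiff_const

lemma contDiff_PD (L : List (Fin n)) {f : EuclideanSpace ℝ (Fin n) → ℂ}
    (hf : ContDiff ℝ (⊤ : ℕ∞) f) : ContDiff ℝ (⊤ : ℕ∞) (PD L f) := by
  induction L with
  | nil => exact hf
  | cons i L ih => exact contDiff_pdE ih i

lemma pdE_add {f g : EuclideanSpace ℝ (Fin n) → ℂ} (hf : ContDiff ℝ (⊤ : ℕ∞) f)
    (hg : ContDiff ℝ (⊤ : ℕ∞) g) (i : Fin n) :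
    pdE i (fun x => f x + g x) = fun x => pdE i f x + pdE i g x := by
  funext x
  simp only [pdE]
  rw [fderiv_fun_add ((hf.differentiable (by simp)).differentiableAt)
    ((hg.differentiable (by simp)).differentiableAt)]
  simp

lemma pdE_mul {f g : EuclideanSpace ℝ (Fin n) → ℂ} (hf : ContDiff ℝ (⊤ : ℕ∞) f)
    (hg : ContDiff ℝ (⊤ : ℕ∞) g) (i : Fin n) :
    pdE i (fun x => f x * g x) = fun x => pdE i f x * g x + f x * pdE i g x := by
  funext x
  simp only [pdE]
  rw [fderiv_fun_mul ((hf.differentiable (by simp)).differentiableAt)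
    ((hg.differentiable (by simp)).differentiableAt)]
  simp [smul_eq_mul]
  ring

lemma contDiff_list_sum {ι : Type*} (l : List ι) (F : ι → EuclideanSpace ℝ (Fin n) → ℂ)
    (hF : ∀ p ∈ l, ContDiff ℝ (⊤ : ℕ∞) (F p)) :
    ContDiff ℝ (⊤ : ℕ∞) (fun x => (l.map (fun p => F p x)).sum) := by
  induction l with
  | nil => simpa using contDiff_const (c := (0:ℂ))
  | cons p l ih =>
    simp only [List.map_cons, List.sum_cons]
    exact (hF p (List.mem_cons_self (a := p) (l := l))).add
      (ih fun q hq => hF q (List.mem_cons_of_mem _ hq))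

lemma pdE_list_sum (i : Fin n) {ι : Type*} (l : List ι)
    (F : ι → EuclideanSpace ℝ (Fin n) → ℂ) (hF : ∀ p ∈ l, ContDiff ℝ (⊤ : ℕ∞) (F p)) :
    pdE i (fun x => (l.map (fun p => F p x)).sum)
      = fun x => (l.map (fun p => pdE i (F p) x)).sum := by
  induction l with
  | nil =>
    funext x
    simp only [List.map_nil, List.sum_nil]
    simp [pdE, fderiv_const]
  | cons p l ih =>
    simp only [List.map_cons, List.sum_cons]
    rw [pdE_add (hF p (List.mem_cons_self (a := p) (l := l)))
      (contDiff_list_sum l F fun q hq => hF q (List.mem_cons_of_mem _ hq)) i,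
      ih fun q hq => hF q (List.mem_cons_of_mem _ hq)]

/-- Leibniz rule for iterated partial derivatives along a list. -/
lemma leibniz (L : List (Fin n)) :
    ∃ l : List (List (Fin n) × List (Fin n)),
      (∀ p ∈ l, p.1.Sublist L ∧ p.2.Sublist L ∧ p.1.length + p.2.length = L.length) ∧
      ∀ (u v : EuclideanSpace ℝ (Fin n) → ℂ), ContDiff ℝ (⊤ : ℕ∞) u → ContDiff ℝ (⊤ : ℕ∞) v →
        PD L (fun y => u y * v y)
          = fun x => (l.map (fun p => PD p.1 u x * PD p.2 v x)).sum := by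
  induction L with
  | nil =>
    refine ⟨[([], [])], by simp, fun u v _ _ => ?_⟩
    funext x
    simp [PD]
  | cons i L ih =>
    obtain ⟨l, hl, hid⟩ := ih
    refine ⟨l.map (fun p => (i :: p.1, p.2)) ++ l.map (fun p => (p.1, i :: p.2)), ?_, ?_⟩
    · intro p hp
      rw [List.mem_append] at hp
      rcases hp with hp | hp <;> rw [List.mem_map] at hp <;>
        obtain ⟨q, hq, rfl⟩ := hp <;> obtain ⟨h1, h2, h3⟩ := hl q hq
      · exact ⟨h1.cons₂ i, h2.cons i, by simp [← h3]; omega⟩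
      · exact ⟨h1.cons i, h2.cons₂ i, by simp [← h3]; omega⟩
    · intro u v hu hv
      rw [PD_cons, hid u v hu hv,
        pdE_list_sum i l (fun p x => PD p.1 u x * PD p.2 v x)
          (fun p hp => (contDiff_PD _ hu).mul (contDiff_PD _ hv))]
      funext x
      have hterm : ∀ p ∈ l,
          pdE i (fun y => PD p.1 u y * PD p.2 v y) x
            = PD (i :: p.1) u x * PD p.2 v x + PD p.1 u x * PD (i :: p.2) v x := by
        intro p hp
        rw [pdE_mul (contDiff_PD _ hu) (contDiff_PD _ hv) i]
        rfl
      rw [List.map_congr_left hterm, List.sum_map_add]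
      simp only [List.map_append, List.sum_append, List.map_map]
      rfl

lemma sorted_canon (α : Fin n → ℕ) : List.Pairwise (· ≤ ·) (canon α) := by
  rw [canon, List.pairwise_flatMap]
  constructor
  · intro i _
    exact List.pairwise_replicate.2 (Or.inr le_rfl)
  · refine (List.pairwise_lt_finRange n).imp ?_
    intro a b hab x hx y hy
    rw [List.eq_of_mem_replicate hx, List.eq_of_mem_replicate hy]
    exact hab.le

lemma count_canon (α : Fin n → ℕ) (j : Fin n) : (canon α).count j = α j := by
  rw [canon, List.count_flatMap]
  have : (List.map (List.count j ∘ fun i => List.replicate (α i) i) (List.finRange n)).sum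
      = ∑ i : Fin n, if i = j then α j else 0 := by
    rw [Fin.sum_univ_def]
    congr 1
    apply List.map_congr_left
    intro i _
    simp only [Function.comp_apply, List.count_replicate]
    by_cases h : i = j <;> simp [h, beq_iff_eq]
  rw [this, Finset.sum_ite_eq' Finset.univ j (fun _ => α j)]
  simp

lemma sum_count (A : List (Fin n)) : ∑ i, A.count i = A.length := by
  induction A with
  | nil => simp
  | cons a A ih =>
    simp only [List.count_cons, List.length_cons]
    rw [Finset.sum_add_distrib, ih]
    congr 1
    simp [beq_iff_eq]

lemma eq_canon (A : List (Fin n)) (hA : List.Pairwise (· ≤ ·) A) :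
    A = canon (fun i => A.count i) := by
  refine List.Perm.eq_of_pairwise' hA (sorted_canon _) ?_
  rw [List.perm_iff_count]
  intro a
  rw [count_canon]

lemma PD_eq_mderiv (A : List (Fin n)) (hA : List.Pairwise (· ≤ ·) A)
    (f : EuclideanSpace ℝ (Fin n) → ℂ) :
    PD A f = mderiv (fun i => A.count i) f := by
  rw [mderiv_eq_PD, ← eq_canon A hA]

end ZygAux
namespace ZygAux

lemma ev_Ioc : ∀ᶠ ε in 𝓝[>] (0:ℝ), ε ∈ Set.Ioc (0:ℝ) 1 :=
  Ioc_mem_nhdsGT_of_mem (by constructor <;> norm_num)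

lemma ev_log_ge_one : ∀ᶠ ε in 𝓝[>] (0:ℝ), 1 ≤ Real.log (1/ε) := by
  filter_upwards [Ioc_mem_nhdsGT_of_mem
    (Set.mem_Ico.mpr ⟨le_rfl, Real.exp_pos (-1)⟩)] with ε hε
  obtain ⟨hε0, hε1⟩ := hε
  rw [one_div, Real.log_inv]
  have := Real.log_le_log hε0 hε1
  rw [Real.log_exp] at this
  linarith

lemma ev_log_le_rpow {δ : ℝ} (hδ : 0 < δ) :
    ∀ᶠ ε in 𝓝[>] (0:ℝ), Real.log (1/ε) ≤ ε ^ (-δ) := by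
  have h := tendsto_log_mul_rpow_nhdsGT_zero hδ
  have h2 : ∀ᶠ ε in 𝓝[>] (0:ℝ), |Real.log ε * ε ^ δ - 0| < 1 :=
    h (Metric.ball_mem_nhds 0 one_pos)
  filter_upwards [h2, eventually_mem_nhdsWithin] with ε hε hε0
  have hε0' : (0:ℝ) < ε := hε0
  rw [sub_zero, abs_mul, abs_of_nonneg (Real.rpow_nonneg hε0'.le δ)] at hε
  have habs : |Real.log ε| ≤ ε ^ (-δ) := by
    rw [Real.rpow_neg hε0'.le, inv_eq_one_div,
      le_div_iff₀ (Real.rpow_pos_of_pos hε0' δ)]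
    linarith
  calc Real.log (1/ε) ≤ |Real.log (1/ε)| := le_abs_self _
  _ = |Real.log ε| := by rw [one_div, Real.log_inv, abs_neg]
  _ ≤ ε ^ (-δ) := habs

/-- Master per-multi-index bound: uniform power envelope with slack `δ`. -/
lemma master {n : ℕ} {r : ℝ} {u : ℝ → EuclideanSpace ℝ (Fin n) → ℂ}
    (hu : ZygGlobal r u) (β : Fin n → ℕ) (δ : ℝ) (hδ : 0 ≤ δ)
    (hδ' : ((∑ i, β i : ℕ) : ℝ) = r → 0 < δ) :
    ∃ C, 0 ≤ C ∧ ∀ᶠ ε in 𝓝[>] (0:ℝ), ∀ x,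
      ‖mderiv β (u ε) x‖ ≤ C * ε ^ (min (r - ((∑ i, β i : ℕ) : ℝ)) 0 - δ) := by
  set a : ℝ := ((∑ i, β i : ℕ) : ℝ) with ha
  rcases lt_trichotomy a r with h | h | h
  · obtain ⟨C, hC⟩ := (hu β).1 h
    refine ⟨max C 0, le_max_right _ _, ?_⟩
    filter_upwards [hC, ev_Ioc] with ε hC hι x
    have hmin : min (r - a) 0 = 0 := min_eq_right (by linarith)
    rw [hmin, zero_sub]
    have h1 : (1:ℝ) ≤ ε ^ (-δ) :=
      Real.one_le_rpow_of_pos_of_le_one_of_nonpos hι.1 hι.2 (by linarith)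
    calc ‖mderiv β (u ε) x‖ ≤ C := hC x
    _ ≤ max C 0 := le_max_left _ _
    _ ≤ max C 0 * ε ^ (-δ) := le_mul_of_one_le_right (le_max_right _ _) h1
  · obtain ⟨C, hC⟩ := (hu β).2.1 h
    refine ⟨max C 0, le_max_right _ _, ?_⟩
    have hδ0 : 0 < δ := hδ' h
    filter_upwards [hC, ev_Ioc, ev_log_ge_one, ev_log_le_rpow hδ0] with ε hC hι hlog hlr x
    have hmin : min (r - a) 0 = 0 := by rw [h]; simp
    rw [hmin, zero_sub]
    calc ‖mderiv β (u ε) x‖ ≤ C * Real.log (1/ε) := hC x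
    _ ≤ max C 0 * Real.log (1/ε) :=
        mul_le_mul_of_nonneg_right (le_max_left _ _) (by linarith)
    _ ≤ max C 0 * ε ^ (-δ) := mul_le_mul_of_nonneg_left hlr (le_max_right _ _)
  · obtain ⟨C, hC⟩ := (hu β).2.2 h
    refine ⟨max C 0, le_max_right _ _, ?_⟩
    filter_upwards [hC, ev_Ioc] with ε hC hι x
    have hmin : min (r - a) 0 = r - a := min_eq_left (by linarith)
    rw [hmin]
    have hεp : (0:ℝ) ≤ ε ^ (r - a) := Real.rpow_nonneg hι.1.le _
    calc ‖mderiv β (u ε) x‖ ≤ C * ε ^ (r - a) := hC x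
    _ ≤ max C 0 * ε ^ (r - a) := mul_le_mul_of_nonneg_right (le_max_left _ _) hεp
    _ ≤ max C 0 * ε ^ (r - a - δ) := mul_le_mul_of_nonneg_left
        (Real.rpow_le_rpow_of_exponent_ge hι.1 hι.2 (by linarith)) (le_max_right _ _)

/-- Summation of finitely many eventual bounds. -/
lemma sum_bound {n : ℕ} {ι : Type*} (l : List ι)
    (F : ι → ℝ → EuclideanSpace ℝ (Fin n) → ℂ) (w : ℝ → ℝ)
    (hw : ∀ᶠ ε in 𝓝[>] (0:ℝ), 0 ≤ w ε)
    (h : ∀ p ∈ l, ∃ C, ∀ᶠ ε in 𝓝[>] (0:ℝ), ∀ x, ‖F p ε x‖ ≤ C * w ε) :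
    ∃ C, ∀ᶠ ε in 𝓝[>] (0:ℝ), ∀ x,
      ‖(l.map (fun p => F p ε x)).sum‖ ≤ C * w ε := by
  induction l with
  | nil => exact ⟨0, Filter.Eventually.of_forall fun ε x => by simp⟩
  | cons p l ih =>
    obtain ⟨C₁, h₁⟩ := h p (List.mem_cons_self (a := p) (l := l))
    obtain ⟨C₂, h₂⟩ := ih fun q hq => h q (List.mem_cons_of_mem _ hq)
    refine ⟨C₁ + C₂, ?_⟩
    filter_upwards [h₁, h₂] with ε h₁ h₂ x
    simp only [List.map_cons, List.sum_cons]
    calc ‖F p ε x + (l.map (fun q => F q ε x)).sum‖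
        ≤ ‖F p ε x‖ + ‖(l.map (fun q => F q ε x)).sum‖ := norm_add_le _ _
    _ ≤ C₁ * w ε + C₂ * w ε := add_le_add (h₁ x) (h₂ x)
    _ = (C₁ + C₂) * w ε := by ring

end ZygAux

/-- products, the case `max r s > 0`. -/
theorem zygGlobal_mul_pos {n : ℕ} (r s : ℝ) (hrs : 0 < max r s)
    (u v : ℝ → EuclideanSpace ℝ (Fin n) → ℂ)
    (husmooth : ∀ ε ∈ Set.Ioc (0:ℝ) 1, ContDiff ℝ (⊤ : ℕ∞) (u ε))
    (hvsmooth : ∀ ε ∈ Set.Ioc (0:ℝ) 1, ContDiff ℝ (⊤ : ℕ∞) (v ε))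
    (hu : ZygGlobal r u) (hv : ZygGlobal s v) :
    ZygGlobal (min r s) (fun ε x => u ε x * v ε x) := by
  intro α
  obtain ⟨l, hl, hid⟩ := ZygAux.leibniz (ZygAux.canon α)
  have hLlen : (ZygAux.canon α).length = ∑ i, α i := by
    rw [ZygAux.canon, List.length_flatMap, Fin.sum_univ_def]
    congr 1
    apply List.map_congr_left
    intro i _
    simp
  -- the eventual Leibniz identity
  have hident : ∀ᶠ ε in 𝓝[>] (0:ℝ), ∀ x,
      mderiv α ((fun (ε : ℝ) (x : EuclideanSpace ℝ (Fin n)) => u ε x * v ε x) ε) x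
        = (l.map (fun p => ZygAux.PD p.1 (u ε) x * ZygAux.PD p.2 (v ε) x)).sum := by
    filter_upwards [ZygAux.ev_Ioc] with ε hε x
    have h := hid (u ε) (v ε) (husmooth ε hε) (hvsmooth ε hε)
    calc mderiv α ((fun (ε : ℝ) (x : EuclideanSpace ℝ (Fin n)) => u ε x * v ε x) ε) x
        = ZygAux.PD (ZygAux.canon α) (fun y => u ε y * v ε y) x := by
          rw [← ZygAux.mderiv_eq_PD]
    _ = _ := by rw [h]
  -- per-pair data
  have hpair : ∀ p ∈ l, ∃ β γ : Fin n → ℕ,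
      (∀ f, ZygAux.PD p.1 f = mderiv β f) ∧ (∀ f, ZygAux.PD p.2 f = mderiv γ f) ∧
      (∑ i, β i) + (∑ i, γ i) = ∑ i, α i := by
    intro p hp
    obtain ⟨h1, h2, h3⟩ := hl p hp
    refine ⟨fun i => p.1.count i, fun i => p.2.count i,
      fun f => ZygAux.PD_eq_mderiv _ (List.Pairwise.sublist h1 (ZygAux.sorted_canon α)) f,
      fun f => ZygAux.PD_eq_mderiv _ (List.Pairwise.sublist h2 (ZygAux.sorted_canon α)) f, ?_⟩
    rw [ZygAux.sum_count, ZygAux.sum_count, h3, hLlen]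
  refine ⟨?_, ?_, ?_⟩
  -- CASE 1 : |α| < min r s
  · intro hlt
    have key : ∀ p ∈ l, ∃ C, ∀ᶠ ε in 𝓝[>] (0:ℝ), ∀ x,
        ‖ZygAux.PD p.1 (u ε) x * ZygAux.PD p.2 (v ε) x‖ ≤ C * 1 := by
      intro p hp
      obtain ⟨β, γ, hβ, hγ, hsum⟩ := hpair p hp
      have hβr : ((∑ i, β i : ℕ) : ℝ) < r := by
        have h1 : (∑ i, β i) ≤ ∑ i, α i := by omega
        calc ((∑ i, β i : ℕ) : ℝ) ≤ ((∑ i, α i : ℕ) : ℝ) := Nat.cast_le.mpr h1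
        _ < min r s := hlt
        _ ≤ r := min_le_left r s
      have hγs : ((∑ i, γ i : ℕ) : ℝ) < s := by
        have h1 : (∑ i, γ i) ≤ ∑ i, α i := by omega
        calc ((∑ i, γ i : ℕ) : ℝ) ≤ ((∑ i, α i : ℕ) : ℝ) := Nat.cast_le.mpr h1
        _ < min r s := hlt
        _ ≤ s := min_le_right r s
      obtain ⟨C₁, h₁⟩ := (hu β).1 hβr
      obtain ⟨C₂, h₂⟩ := (hv γ).1 hγs
      refine ⟨C₁ * C₂, ?_⟩
      filter_upwards [h₁, h₂] with ε h₁ h₂ x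
      rw [mul_one, hβ (u ε), hγ (v ε), norm_mul]
      exact mul_le_mul (h₁ x) (h₂ x) (norm_nonneg _) ((norm_nonneg _).trans (h₁ x))
    obtain ⟨C, hC⟩ := ZygAux.sum_bound l
      (fun p ε x => ZygAux.PD p.1 (u ε) x * ZygAux.PD p.2 (v ε) x) (fun _ => 1)
      (Filter.Eventually.of_forall fun _ => zero_le_one) key
    refine ⟨C, ?_⟩
    filter_upwards [hC, hident] with ε h1 h2 x
    rw [h2 x]
    simpa using h1 x
  -- CASE 2 : |α| = min r s
  · intro heq
    have key : ∀ p ∈ l, ∃ C, ∀ᶠ ε in 𝓝[>] (0:ℝ), ∀ x,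
        ‖ZygAux.PD p.1 (u ε) x * ZygAux.PD p.2 (v ε) x‖ ≤ C * Real.log (1/ε) := by
      intro p hp
      obtain ⟨β, γ, hβ, hγ, hsum⟩ := hpair p hp
      set a : ℝ := ((∑ i, β i : ℕ) : ℝ) with ha
      set b : ℝ := ((∑ i, γ i : ℕ) : ℝ) with hb
      have hab : a + b = ((∑ i, α i : ℕ) : ℝ) := by
        rw [ha, hb, ← Nat.cast_add, hsum]
      have ha0 : 0 ≤ a := Nat.cast_nonneg _
      have hb0 : 0 ≤ b := Nat.cast_nonneg _
      have har : a ≤ r := by linarith [min_le_left r s]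
      have hbs : b ≤ s := by linarith [min_le_right r s]
      rcases eq_or_lt_of_le har with heqa | hlta
      · -- a = r ; then b < s
        have hs0 : 0 < s := by
          by_contra hs
          push_neg at hs
          have hmax : max r s ≤ 0 := max_le (by linarith [min_le_right r s]) hs
          linarith
        have hbs' : b < s := by linarith [min_le_left r s]
        obtain ⟨C₁, h₁⟩ := (hu β).2.1 heqa
        obtain ⟨C₂, h₂⟩ := (hv γ).1 hbs'
        refine ⟨C₁ * C₂, ?_⟩
        filter_upwards [h₁, h₂] with ε h₁ h₂ x
        rw [hβ (u ε), hγ (v ε), norm_mul]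
        calc ‖mderiv β (u ε) x‖ * ‖mderiv γ (v ε) x‖
            ≤ (C₁ * Real.log (1/ε)) * C₂ :=
              mul_le_mul (h₁ x) (h₂ x) (norm_nonneg _) ((norm_nonneg _).trans (h₁ x))
        _ = C₁ * C₂ * Real.log (1/ε) := by ring
      · rcases eq_or_lt_of_le hbs with heqb | hltb
        · obtain ⟨C₁, h₁⟩ := (hu β).1 hlta
          obtain ⟨C₂, h₂⟩ := (hv γ).2.1 heqb
          refine ⟨C₁ * C₂, ?_⟩
          filter_upwards [h₁, h₂] with ε h₁ h₂ x
          rw [hβ (u ε), hγ (v ε), norm_mul]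
          calc ‖mderiv β (u ε) x‖ * ‖mderiv γ (v ε) x‖
              ≤ C₁ * (C₂ * Real.log (1/ε)) :=
                mul_le_mul (h₁ x) (h₂ x) (norm_nonneg _) ((norm_nonneg _).trans (h₁ x))
          _ = C₁ * C₂ * Real.log (1/ε) := by ring
        · obtain ⟨C₁, h₁⟩ := (hu β).1 hlta
          obtain ⟨C₂, h₂⟩ := (hv γ).1 hltb
          refine ⟨C₁ * C₂, ?_⟩
          filter_upwards [h₁, h₂, ZygAux.ev_log_ge_one] with ε h₁ h₂ hlog x
          rw [hβ (u ε), hγ (v ε), norm_mul]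
          have hC₁0 : 0 ≤ C₁ := (norm_nonneg _).trans (h₁ 0)
          have hC₂0 : 0 ≤ C₂ := (norm_nonneg _).trans (h₂ 0)
          calc ‖mderiv β (u ε) x‖ * ‖mderiv γ (v ε) x‖
              ≤ C₁ * C₂ :=
                mul_le_mul (h₁ x) (h₂ x) (norm_nonneg _) ((norm_nonneg _).trans (h₁ x))
          _ ≤ C₁ * C₂ * Real.log (1/ε) :=
              le_mul_of_one_le_right (mul_nonneg hC₁0 hC₂0) hlog
    obtain ⟨C, hC⟩ := ZygAux.sum_bound l
      (fun p ε x => ZygAux.PD p.1 (u ε) x * ZygAux.PD p.2 (v ε) x)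
      (fun ε => Real.log (1/ε))
      (by filter_upwards [ZygAux.ev_log_ge_one] with ε h; linarith) key
    refine ⟨C, ?_⟩
    filter_upwards [hC, hident] with ε h1 h2 x
    rw [h2 x]
    exact h1 x
  -- CASE 3 : min r s < |α|
  · intro hgt
    have key : ∀ p ∈ l, ∃ C, ∀ᶠ ε in 𝓝[>] (0:ℝ), ∀ x,
        ‖ZygAux.PD p.1 (u ε) x * ZygAux.PD p.2 (v ε) x‖
          ≤ C * ε ^ (min r s - ((∑ i, α i : ℕ) : ℝ)) := by
      intro p hp
      obtain ⟨β, γ, hβ, hγ, hsum⟩ := hpair p hp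
      set a : ℝ := ((∑ i, β i : ℕ) : ℝ) with ha
      set b : ℝ := ((∑ i, γ i : ℕ) : ℝ) with hb
      set m : ℝ := ((∑ i, α i : ℕ) : ℝ) with hm
      have hab : a + b = m := by rw [ha, hb, hm, ← Nat.cast_add, hsum]
      have ha0 : 0 ≤ a := Nat.cast_nonneg _
      have hb0 : 0 ≤ b := Nat.cast_nonneg _
      set ea : ℝ := min (r - a) 0 with hea
      set eb : ℝ := min (s - b) 0 with heb
      have hE : min r s - m ≤ ea + eb := by
        rcases le_total (r - a) 0 with h1 | h1 <;> rcases le_total (s - b) 0 with h2 | h2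
        · rw [hea, heb, min_eq_left h1, min_eq_left h2]
          linarith [min_add_max r s, hrs.le]
        · rw [hea, heb, min_eq_left h1, min_eq_right h2]
          linarith [min_le_left r s]
        · rw [hea, heb, min_eq_right h1, min_eq_left h2]
          linarith [min_le_right r s]
        · rw [hea, heb, min_eq_right h1, min_eq_right h2]
          linarith
      have hslack : (a = r ∨ b = s) → min r s - m < ea + eb := by
        rintro (h | h)
        · have he : ea = 0 := by rw [hea, h]; simp
          rw [he, zero_add]
          rcases le_total (s - b) 0 with h2 | h2
          · rw [heb, min_eq_left h2]
            linarith [min_add_max r s]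
          · rw [heb, min_eq_right h2]
            linarith
        · have he : eb = 0 := by rw [heb, h]; simp
          rw [he, add_zero]
          rcases le_total (r - a) 0 with h2 | h2
          · rw [hea, min_eq_left h2]
            linarith [min_add_max r s]
          · rw [hea, min_eq_right h2]
            linarith
      set t : ℝ := ea + eb - (min r s - m) with ht
      set δu : ℝ := if a = r then t/2 else 0 with hδu
      set δv : ℝ := if b = s then t/2 else 0 with hδv
      have hδu0 : 0 ≤ δu := by
        rw [hδu]; split_ifs with h
        · have := hslack (Or.inl h); rw [ht]; linarith
        · exact le_rfl
      have hδv0 : 0 ≤ δv := by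
        rw [hδv]; split_ifs with h
        · have := hslack (Or.inr h); rw [ht]; linarith
        · exact le_rfl
      have hδupos : a = r → 0 < δu := by
        intro h; rw [hδu, if_pos h, ht]
        have := hslack (Or.inl h); linarith
      have hδvpos : b = s → 0 < δv := by
        intro h; rw [hδv, if_pos h, ht]
        have := hslack (Or.inr h); linarith
      have hexp : min r s - m ≤ (ea - δu) + (eb - δv) := by
        rw [hδu, hδv]
        split_ifs with h1 h2 h2
        · have := hslack (Or.inl h1); rw [ht]; linarith
        · have := hslack (Or.inl h1); rw [ht]; linarith
        · have := hslack (Or.inr h2); rw [ht]; linarith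
        · linarith
      obtain ⟨C₁, hC₁0, h₁⟩ := ZygAux.master hu β δu hδu0 (fun h => hδupos (by rw [ha]; exact h))
      obtain ⟨C₂, hC₂0, h₂⟩ := ZygAux.master hv γ δv hδv0 (fun h => hδvpos (by rw [hb]; exact h))
      rw [← ha, ← hea] at h₁
      rw [← hb, ← heb] at h₂
      refine ⟨C₁ * C₂, ?_⟩
      filter_upwards [h₁, h₂, ZygAux.ev_Ioc] with ε h₁ h₂ hι x
      rw [hβ (u ε), hγ (v ε), norm_mul]
      calc ‖mderiv β (u ε) x‖ * ‖mderiv γ (v ε) x‖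
          ≤ (C₁ * ε ^ (ea - δu)) * (C₂ * ε ^ (eb - δv)) :=
            mul_le_mul (h₁ x) (h₂ x) (norm_nonneg _)
              (mul_nonneg hC₁0 (Real.rpow_nonneg hι.1.le _))
      _ = (C₁ * C₂) * (ε ^ (ea - δu) * ε ^ (eb - δv)) := by ring
      _ = (C₁ * C₂) * ε ^ ((ea - δu) + (eb - δv)) := by
          rw [← Real.rpow_add hι.1]
      _ ≤ (C₁ * C₂) * ε ^ (min r s - m) :=
          mul_le_mul_of_nonneg_left
            (Real.rpow_le_rpow_of_exponent_ge hι.1 hι.2 hexp)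
            (mul_nonneg hC₁0 hC₂0)
    obtain ⟨C, hC⟩ := ZygAux.sum_bound l
      (fun p ε x => ZygAux.PD p.1 (u ε) x * ZygAux.PD p.2 (v ε) x)
      (fun ε => ε ^ (min r s - ((∑ i, α i : ℕ) : ℝ)))
      (by filter_upwards [ZygAux.ev_Ioc] with ε hι
          exact Real.rpow_nonneg hι.1.le _) key
    refine ⟨C, ?_⟩
    filter_upwards [hC, hident] with ε h1 h2 x
    rw [h2 x]
    exact h1 x
end
end

section
/- Let f be a smooth function on ℝ of growth order M with M ≤ 0, and let 0 < r ≤ 1. Then the family (u_ε)_{ε∈(0,1]} defined by u_ε(x) = f(x/ε^r) satisfies the local Zygmund estimates of order 1 − r on ℝ. -/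
open MeasureTheory SchwartzMap Filter
open scoped FourierTransform Topology

noncomputable section

/-- A family `(u_ε)` of functions on `ℝ` satisfies the local Zygmund estimates of order `s`
(on `Ω = ℝ`): for every compact `K` and every derivative order `k`, as `ε → 0⁺`,
`sup_{x ∈ K} ‖u_ε^{(k)}(x)‖` is `O(1)` for `k < s`, `O(log(1/ε))` for `k = s` and
`O(ε^{s-k})` for `k > s`. -/
def ZygLoc1 {F : Type*} [NormedAddCommGroup F] [NormedSpace ℝ F]
    (s : ℝ) (u : ℝ → ℝ → F) : Prop :=
  ∀ K : Set ℝ, IsCompact K → ∀ k : ℕ,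
    (((k : ℕ) : ℝ) < s →
      ∃ C, ∀ᶠ ε in 𝓝[>] (0:ℝ), ∀ x ∈ K, ‖iteratedDeriv k (u ε) x‖ ≤ C) ∧
    ((((k : ℕ) : ℝ) = s →
      ∃ C, ∀ᶠ ε in 𝓝[>] (0:ℝ), ∀ x ∈ K, ‖iteratedDeriv k (u ε) x‖ ≤ C * Real.log (1/ε))) ∧
    (s < ((k : ℕ) : ℝ) →
      ∃ C, ∀ᶠ ε in 𝓝[>] (0:ℝ), ∀ x ∈ K, ‖iteratedDeriv k (u ε) x‖ ≤ C * ε ^ (s - (k : ℕ)))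

/-- for `f` smooth of growth order `M ≤ 0` and `0 < r ≤ 1`, the scaled family
`u_ε(x) = f(x/ε^r)` satisfies the local Zygmund estimates of order `1 - r` on `ℝ`. -/
theorem scaled_zygLoc_nonpos_growth (M : ℝ) (hM : M ≤ 0) (r : ℝ) (hr0 : 0 < r) (hr1 : r ≤ 1)
    (f : ℝ → ℝ) (hf : ContDiff ℝ (⊤ : ℕ∞) f)
    (hgrowth : ∀ k : ℕ, ∃ C : ℝ, ∀ x : ℝ, |iteratedDeriv k f x| ≤ C * (1 + |x|) ^ M) :
    ZygLoc1 (1 - r) (fun ε x => f (x / ε ^ r)) := by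
  intro K hK k
  obtain ⟨C, hC⟩ := hgrowth k
  set D := max C 0 with hD
  have hD0 : 0 ≤ D := le_max_right _ _
  have hbound : ∀ x, |iteratedDeriv k f x| ≤ D := by
    intro x
    have h1 : (1:ℝ) ≤ 1 + |x| := by simp [abs_nonneg]
    have hle : (1 + |x|) ^ M ≤ 1 := Real.rpow_le_one_of_one_le_of_nonpos h1 hM
    have hnn : (0:ℝ) ≤ (1 + |x|) ^ M := Real.rpow_nonneg (by linarith) M
    calc |iteratedDeriv k f x| ≤ C * (1 + |x|) ^ M := hC x
      _ ≤ D * (1 + |x|) ^ M := mul_le_mul_of_nonneg_right (le_max_left _ _) hnn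
      _ ≤ D * 1 := mul_le_mul_of_nonneg_left hle hD0
      _ = D := mul_one D
  -- key identity and bound
  have key : ∀ ε : ℝ, 0 < ε → ∀ x : ℝ,
      ‖iteratedDeriv k (fun x => f (x / ε ^ r)) x‖ ≤ ε ^ (-(r * k)) * D := by
    intro ε hε x
    have hεr : (0:ℝ) < ε ^ r := Real.rpow_pos_of_pos hε r
    have hfk : ContDiff ℝ k f := hf.of_le (by exact_mod_cast le_top)
    have heq : (fun x : ℝ => f (x / ε ^ r)) = fun x : ℝ => f ((ε ^ r)⁻¹ * x) := by
      funext y; rw [div_eq_inv_mul]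
    rw [heq, iteratedDeriv_comp_const_mul hfk]
    have hpow : ((ε ^ r)⁻¹) ^ k = ε ^ (-(r * k)) := by
      rw [← Real.rpow_neg_one, ← Real.rpow_natCast ((ε ^ r) ^ (-1:ℝ)) k,
        ← Real.rpow_mul hε.le, ← Real.rpow_mul hε.le]
      ring_nf
    rw [Real.norm_eq_abs, abs_mul, hpow]
    have : |ε ^ (-(r * k))| = ε ^ (-(r * k)) :=
      abs_of_nonneg (Real.rpow_nonneg hε.le _)
    rw [this]
    exact mul_le_mul_of_nonneg_left (hbound _) (Real.rpow_nonneg hε.le _)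
  refine ⟨?_, ?_, ?_⟩
  · -- k < 1 - r : then k = 0
    intro hk
    have hk0 : k = 0 := by
      by_contra h
      have : (1:ℝ) ≤ (k:ℝ) := by exact_mod_cast Nat.one_le_iff_ne_zero.mpr h
      linarith
    subst hk0
    refine ⟨D, ?_⟩
    filter_upwards [self_mem_nhdsWithin] with ε hε x _
    have := key ε hε x
    simpa using this
  · -- k = 1 - r : then k = 0 and r = 1
    intro hk
    have hk0 : k = 0 := by
      by_contra h
      have : (1:ℝ) ≤ (k:ℝ) := by exact_mod_cast Nat.one_le_iff_ne_zero.mpr h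
      linarith
    subst hk0
    refine ⟨D, ?_⟩
    have hmem : Set.Ioo (0:ℝ) (Real.exp (-1)) ∈ 𝓝[>] (0:ℝ) :=
      Ioo_mem_nhdsGT_of_mem ⟨le_refl 0, Real.exp_pos _⟩
    filter_upwards [hmem] with ε hε x _
    have h1 : (1:ℝ) ≤ Real.log (1/ε) := by
      rw [one_div, Real.log_inv]
      have := Real.log_lt_log hε.1 hε.2
      rw [Real.log_exp] at this
      linarith
    have := key ε hε.1 x
    simp only [Nat.cast_zero, mul_zero, neg_zero, Real.rpow_zero, one_mul] at this
    calc ‖iteratedDeriv 0 (fun x => f (x / ε ^ r)) x‖ ≤ D := this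
      _ = D * 1 := (mul_one D).symm
      _ ≤ D * Real.log (1/ε) := mul_le_mul_of_nonneg_left h1 hD0
  · -- 1 - r < k
    intro hk
    have hk1 : 1 ≤ k := by
      by_contra h
      push_neg at h
      interval_cases k
      simp at hk
      linarith
    refine ⟨D, ?_⟩
    have hmem : Set.Ioo (0:ℝ) 1 ∈ 𝓝[>] (0:ℝ) :=
      Ioo_mem_nhdsGT_of_mem ⟨le_refl 0, one_pos⟩
    filter_upwards [hmem] with ε hε x _
    have hexp : (1 - r) - (k:ℝ) ≤ -(r * k) := by
      have h1 : (1:ℝ) ≤ (k:ℝ) := by exact_mod_cast hk1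
      nlinarith
    have hmono : ε ^ (-(r * k)) ≤ ε ^ ((1 - r) - (k:ℝ)) :=
      Real.rpow_le_rpow_of_exponent_ge hε.1 hε.2.le hexp
    calc ‖iteratedDeriv k (fun x => f (x / ε ^ r)) x‖
        ≤ ε ^ (-(r * k)) * D := key ε hε.1 x
      _ ≤ ε ^ ((1 - r) - (k:ℝ)) * D := mul_le_mul_of_nonneg_right hmono hD0
      _ = D * ε ^ ((1 - r) - (k:ℝ)) := mul_comm _ _
end
end

section
/- Let r > 1 and define u_ε(x) = sin(x/ε^r) for ε ∈ (0,1] and x ∈ ℝ. Then there is no s ∈ ℝ such that the family (u_ε)_{ε∈(0,1]} satisfies the local Zygmund estimates of order s on ℝ. -/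
/-!
For odd `k` the `k`-th derivative of `x ↦ sin (x / ε ^ r)` at `0` has absolute value `ε ^ (-r k)`.
Since `r > 1`, every `s` admits an odd order `k > s` with `-r k < s - k`; there the estimate
`ε ^ (-r k) ≤ C ε ^ (s - k)` demanded by the Zygmund bound fails as `ε → 0⁺`.
-/

open MeasureTheory SchwartzMap Filter
open scoped FourierTransform Topology

noncomputable section

lemma abs_iteratedDeriv_odd_sin_div_zero (a : ℝ) (n : ℕ) :
    |iteratedDeriv (2 * n + 1) (fun x => Real.sin (x / a)) 0| = |a⁻¹| ^ (2 * n + 1) := by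
  simp_rw [div_eq_inv_mul]
  rw [iteratedDeriv_comp_const_mul Real.contDiff_sin, Real.iteratedDeriv_odd_sin]
  simp [abs_pow]

lemma abs_iteratedDeriv_odd_sin_div_rpow_zero {ε : ℝ} (hε : 0 < ε) (r : ℝ) (n : ℕ) :
    |iteratedDeriv (2 * n + 1) (fun x => Real.sin (x / ε ^ r)) 0|
      = ε ^ (-(r * (2 * n + 1 : ℕ))) := by
  rw [abs_iteratedDeriv_odd_sin_div_zero, abs_of_pos (inv_pos.2 (Real.rpow_pos_of_pos hε r)),
    ← Real.rpow_neg hε.le, ← Real.rpow_natCast, ← Real.rpow_mul hε.le, neg_mul]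

lemma not_eventually_rpow_le_mul_rpow {a b : ℝ} (hab : a < b) (C : ℝ) :
    ¬ ∀ᶠ ε in 𝓝[>] (0 : ℝ), ε ^ a ≤ C * ε ^ b := by
  intro h
  have hblowup := (tendsto_rpow_neg_nhdsGT_zero (sub_neg.2 hab)).eventually_gt_atTop C
  obtain ⟨ε, hle, hgt, hε : 0 < ε⟩ := (h.and (hblowup.and self_mem_nhdsWithin)).exists
  rw [Real.rpow_sub hε, lt_div_iff₀ (Real.rpow_pos_of_pos hε b)] at hgt
  exact hle.not_gt hgt

lemma eventually_lt_and_neg_mul_lt_sub {r : ℝ} (hr : 1 < r) (s : ℝ) :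
    ∀ᶠ k : ℝ in atTop, s < k ∧ -(r * k) < s - k := by
  filter_upwards [eventually_gt_atTop s, eventually_gt_atTop (-s / (r - 1))] with k hsk hk
  refine ⟨hsk, ?_⟩
  rw [div_lt_iff₀ (sub_pos.2 hr)] at hk
  linarith

lemma tendsto_odd_natCast_atTop : Tendsto (fun n : ℕ => ((2 * n + 1 : ℕ) : ℝ)) atTop atTop :=
  tendsto_natCast_atTop_atTop.comp <|
    tendsto_atTop_mono (fun n => by simp only [id]; omega) tendsto_id

/-- for `r > 1`, the family `u_ε(x) = sin(x/ε^r)` has no Zygmund regularity. -/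
theorem sin_scaled_no_zygLoc (r : ℝ) (hr : 1 < r) :
    ¬ ∃ s : ℝ, ZygLoc1 s (fun ε x => Real.sin (x / ε ^ r)) := by
  rintro ⟨s, hs⟩
  obtain ⟨n, hsk, hexp⟩ :=
    (tendsto_odd_natCast_atTop.eventually (eventually_lt_and_neg_mul_lt_sub hr s)).exists
  obtain ⟨C, hC⟩ := (hs {0} isCompact_singleton (2 * n + 1)).2.2 hsk
  refine not_eventually_rpow_le_mul_rpow hexp C ?_
  filter_upwards [hC, self_mem_nhdsWithin] with ε hbound (hε : 0 < ε)
  simpa only [Real.norm_eq_abs, abs_iteratedDeriv_odd_sin_div_rpow_zero hε] using hbound 0 rfl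
end
end

section
/- Let p be a real polynomial of degree m ≥ 1, let r > 0, and define u_ε(x) = p(x/ε^r) for ε ∈ (0,1] and x ∈ ℝ. Then for s ∈ ℝ, the family (u_ε)_{ε∈(0,1]} satisfies the local Zygmund estimates of order s on ℝ if and only if s ≤ −rm. -/
/-!
With `c = ε^{-r} ≥ 1`, `u_ε(x) = p(c x)` has `k`-th derivative `c^k p^{(k)}(c x)`, which on a
compact set is `O(c^m) = O(ε^{-rm})` for every `k`. For `s ≤ -rm < 0` every `k` lies above `s`, and
`ε^{-rm} ≤ ε^{s-k}`, so the estimates hold. Conversely, for `k = 0` each of the three kinds of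
estimate forces `u_ε(1) = o(ε^{-rm})` as soon as `s > -rm`, whereas `u_ε(1) = p(ε^{-r})` is
asymptotic to `lc(p) ε^{-rm}` with `lc(p) ≠ 0`.
-/

open MeasureTheory SchwartzMap Filter
open scoped FourierTransform Topology

noncomputable section

open Polynomial Asymptotics Real

namespace Polynomial

theorem iteratedDeriv_eval {𝕜 : Type*} [NontriviallyNormedField 𝕜] (p : 𝕜[X]) (k : ℕ) :
    iteratedDeriv k (fun x => p.eval x) = fun x => (derivative^[k] p).eval x := by
  rw [iteratedDeriv_eq_iterate]
  induction k generalizing p with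
  | zero => rfl
  | succ k ih =>
    have hderiv : _root_.deriv (fun x => p.eval x) = fun x => (derivative p).eval x := by
      ext x
      exact Polynomial.deriv p
    rw [Function.iterate_succ_apply, Function.iterate_succ_apply, hderiv, ih]

theorem iteratedDeriv_eval_const_mul {𝕜 : Type*} [NontriviallyNormedField 𝕜] (p : 𝕜[X])
    (k : ℕ) (c : 𝕜) :
    iteratedDeriv k (fun x => p.eval (c * x)) =
      fun x => c ^ k * (derivative^[k] p).eval (c * x) := by
  have hp : ContDiff 𝕜 k fun x => p.eval x := by simpa using p.contDiff_aeval (𝕜 := 𝕜) k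
  rw [iteratedDeriv_comp_const_mul hp c, iteratedDeriv_eval]

theorem abs_eval_mul_le (q : ℝ[X]) {c x R : ℝ} (hc : 1 ≤ c) (hx : |x| ≤ R) :
    |q.eval (c * x)| ≤
      c ^ q.natDegree * ∑ i ∈ Finset.range (q.natDegree + 1), |q.coeff i| * R ^ i := by
  rw [eval_eq_sum_range, Finset.mul_sum]
  refine (Finset.abs_sum_le_sum_abs _ _).trans (Finset.sum_le_sum fun i hi => ?_)
  have hci : c ^ i ≤ c ^ q.natDegree := pow_le_pow_right₀ hc (Finset.mem_range_succ_iff.mp hi)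
  have hxi : |x| ^ i ≤ R ^ i := pow_le_pow_left₀ (abs_nonneg x) hx i
  rw [abs_mul, abs_pow, abs_mul, abs_of_pos (zero_lt_one.trans_le hc), mul_pow]
  calc |q.coeff i| * (c ^ i * |x| ^ i) ≤ |q.coeff i| * (c ^ q.natDegree * R ^ i) := by gcongr
    _ = c ^ q.natDegree * (|q.coeff i| * R ^ i) := by ring

theorem exists_abs_iteratedDeriv_eval_const_mul_le (p : ℝ[X]) (k : ℕ) {K : Set ℝ}
    (hK : IsCompact K) :
    ∃ M, 0 ≤ M ∧ ∀ c, 1 ≤ c → ∀ x ∈ K,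
      |iteratedDeriv k (fun x => p.eval (c * x)) x| ≤ M * c ^ p.natDegree := by
  obtain ⟨R, hR0, hKR⟩ := hK.isBounded.subset_closedBall_lt 0 0
  set q := derivative^[k] p with hq
  set M := ∑ i ∈ Finset.range (q.natDegree + 1), |q.coeff i| * R ^ i
  have hM : 0 ≤ M := Finset.sum_nonneg fun i _ => by positivity
  refine ⟨M, hM, fun c hc x hx => ?_⟩
  have hc0 : 0 < c := zero_lt_one.trans_le hc
  have hx : |x| ≤ R := by simpa using hKR hx
  rw [iteratedDeriv_eval_const_mul, abs_mul, abs_pow, abs_of_pos hc0, ← hq]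
  rcases le_or_gt k p.natDegree with hk | hk
  · have hdeg : k + q.natDegree ≤ p.natDegree := by
      have : q.natDegree ≤ p.natDegree - k := natDegree_iterate_derivative p k
      omega
    calc c ^ k * |q.eval (c * x)| ≤ c ^ k * (c ^ q.natDegree * M) := by
          gcongr; exact q.abs_eval_mul_le hc hx
      _ = c ^ (k + q.natDegree) * M := by ring
      _ ≤ M * c ^ p.natDegree := by rw [mul_comm]; gcongr
  · rw [hq, iterate_derivative_eq_zero hk, eval_zero, abs_zero, mul_zero]
    positivity

end Polynomial

theorem one_div_rpow_pow {ε : ℝ} (hε : 0 ≤ ε) (r : ℝ) (n : ℕ) :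
    (1 / ε ^ r) ^ n = ε ^ (-(r * n)) := by
  rw [one_div, ← rpow_neg hε, ← rpow_natCast, ← rpow_mul hε, neg_mul]

theorem isLittleO_rpow_rpow_nhdsGT_zero {s t : ℝ} (hts : t < s) :
    (fun ε : ℝ => ε ^ s) =o[𝓝[>] 0] fun ε => ε ^ t := by
  have hst : 0 < s - t := sub_pos.2 hts
  have hlim : Tendsto (fun ε : ℝ => ε ^ (s - t)) (𝓝 0) (𝓝 0) := by
    simpa [zero_rpow hst.ne'] using (continuousAt_rpow_const 0 (s - t) (.inr hst.le)).tendsto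
  have hsmall : (fun ε : ℝ => ε ^ (s - t)) =o[𝓝[>] 0] fun _ => (1 : ℝ) :=
    (isLittleO_one_iff ℝ).2 (hlim.mono_left nhdsWithin_le_nhds)
  refine (hsmall.mul_isBigO (isBigO_refl (fun ε : ℝ => ε ^ t) _)).congr' ?_ ?_
  · filter_upwards [self_mem_nhdsWithin] with ε (hε : 0 < ε)
    rw [← rpow_add hε, sub_add_cancel]
  · exact Eventually.of_forall fun ε => one_mul _

theorem isLittleO_log_one_div_rpow_nhdsGT_zero {t : ℝ} (ht : t < 0) :
    (fun ε : ℝ => log (1 / ε)) =o[𝓝[>] 0] fun ε => ε ^ t := by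
  simpa only [one_div, log_inv] using (isLittleO_log_rpow_nhdsGT_zero ht).neg_left

theorem Asymptotics.isBigO_of_eventually_norm_le_mul {α F : Type*} [Norm F] {l : Filter α}
    {f : α → F} {g : α → ℝ} {C : ℝ} (h : ∀ᶠ x in l, ‖f x‖ ≤ C * g x) : f =O[l] g :=
  IsBigO.of_bound |C| <| h.mono fun x hx => hx.trans <| (le_abs_self _).trans_eq <| by
    rw [abs_mul, norm_eq_abs]

section ZygLoc1

variable {F : Type*} [NormedAddCommGroup F] [NormedSpace ℝ F] {s : ℝ} {u : ℝ → ℝ → F}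

theorem zygLoc1_of_neg (hs : s < 0)
    (h : ∀ K : Set ℝ, IsCompact K → ∀ k : ℕ, ∃ C, ∀ᶠ ε in 𝓝[>] (0:ℝ), ∀ x ∈ K,
      ‖iteratedDeriv k (u ε) x‖ ≤ C * ε ^ (s - k)) :
    ZygLoc1 s u := by
  intro K hK k
  have hk : s < k := hs.trans_le k.cast_nonneg
  exact ⟨fun hks => absurd hk hks.not_gt, fun hks => absurd hks.symm hk.ne, fun _ => h K hK k⟩

theorem ZygLoc1.isLittleO_rpow (h : ZygLoc1 s u) {t : ℝ} (hts : t < s) (ht : t < 0) (x : ℝ) :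
    (fun ε => u ε x) =o[𝓝[>] 0] fun ε => ε ^ t := by
  obtain ⟨hlt, heq, hgt⟩ := h {x} isCompact_singleton 0
  simp only [Nat.cast_zero, iteratedDeriv_zero, sub_zero, Set.mem_singleton_iff, forall_eq]
    at hlt heq hgt
  rcases lt_trichotomy s 0 with hs | rfl | hs
  · obtain ⟨C, hC⟩ := hgt hs
    exact (isBigO_of_eventually_norm_le_mul hC).trans_isLittleO
      (isLittleO_rpow_rpow_nhdsGT_zero hts)
  · obtain ⟨C, hC⟩ := heq rfl
    exact (isBigO_of_eventually_norm_le_mul hC).trans_isLittleO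
      (isLittleO_log_one_div_rpow_nhdsGT_zero ht)
  · obtain ⟨C, hC⟩ := hlt hs
    have hbdd : (fun ε => u ε x) =O[𝓝[>] 0] fun _ => (1 : ℝ) :=
      isBigO_of_eventually_norm_le_mul (C := C) (by simpa using hC)
    refine hbdd.trans_isLittleO ((isLittleO_one_left_iff ℝ).2 ?_)
    refine (tendsto_rpow_neg_nhdsGT_zero ht).congr' ?_
    filter_upwards [self_mem_nhdsWithin] with ε (hε : 0 < ε)
    rw [norm_eq_abs, abs_of_pos (rpow_pos_of_pos hε t)]

end ZygLoc1

namespace Polynomial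

theorem isEquivalent_eval_one_div_rpow (p : ℝ[X]) {r : ℝ} (hr : 0 < r) :
    (fun ε => p.eval (1 / ε ^ r)) ~[𝓝[>] 0]
      fun ε => p.leadingCoeff * ε ^ (-(r * p.natDegree)) := by
  have hlim : Tendsto (fun ε : ℝ => 1 / ε ^ r) (𝓝[>] 0) atTop := by
    refine (tendsto_rpow_neg_nhdsGT_zero (neg_lt_zero.2 hr)).congr' ?_
    filter_upwards [self_mem_nhdsWithin] with ε (hε : 0 < ε)
    rw [rpow_neg hε.le, one_div]
  refine (p.isEquivalent_atTop_lead.comp_tendsto hlim).congr_right ?_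
  filter_upwards [self_mem_nhdsWithin] with ε (hε : 0 < ε)
  simp only [Function.comp_apply, one_div_rpow_pow hε.le]

theorem le_of_zygLoc1_eval_div_rpow {p : ℝ[X]} (hp : 0 < p.natDegree) {r s : ℝ} (hr : 0 < r)
    (h : ZygLoc1 s fun ε x => p.eval (x / ε ^ r)) :
    s ≤ -(r * p.natDegree) := by
  by_contra! hs
  have hrm : -(r * p.natDegree) < 0 := neg_neg_of_pos (by positivity)
  have hsmall : (fun ε => p.eval (1 / ε ^ r)) =o[𝓝[>] 0] fun ε => ε ^ (-(r * p.natDegree)) :=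
    h.isLittleO_rpow hs hrm 1
  have hlead := (p.isEquivalent_eval_one_div_rpow hr).symm.isBigO.trans_isLittleO hsmall
  have hlc : p.leadingCoeff ≠ 0 := leadingCoeff_ne_zero.2 (ne_zero_of_natDegree_gt hp)
  rw [isLittleO_const_mul_left_iff' hlc.isUnit] at hlead
  refine isLittleO_irrefl' (Eventually.frequently ?_) hlead
  filter_upwards [self_mem_nhdsWithin] with ε (hε : 0 < ε)
  exact norm_ne_zero_iff.2 (rpow_pos_of_pos hε _).ne'

theorem zygLoc1_eval_div_rpow {p : ℝ[X]} {r s : ℝ} (hr : 0 ≤ r) (hs0 : s < 0)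
    (hs : s ≤ -(r * p.natDegree)) :
    ZygLoc1 s fun ε x => p.eval (x / ε ^ r) := by
  refine zygLoc1_of_neg hs0 fun K hK k => ?_
  obtain ⟨M, hM, hbound⟩ := p.exists_abs_iteratedDeriv_eval_const_mul_le k hK
  refine ⟨M, ?_⟩
  filter_upwards [Ioc_mem_nhdsGT zero_lt_one] with ε ⟨hε0, hε1⟩ x hx
  have hc : 1 ≤ 1 / ε ^ r := by
    rw [one_div]; exact (one_le_inv₀ (rpow_pos_of_pos hε0 r)).2 (rpow_le_one hε0.le hε1 hr)
  have hu : (fun x => p.eval (x / ε ^ r)) = fun x => p.eval (1 / ε ^ r * x) := by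
    simp only [one_div_mul_eq_div]
  calc ‖iteratedDeriv k (fun x => p.eval (x / ε ^ r)) x‖
      ≤ M * (1 / ε ^ r) ^ p.natDegree := by rw [hu, norm_eq_abs]; exact hbound _ hc x hx
    _ = M * ε ^ (-(r * p.natDegree)) := by rw [one_div_rpow_pow hε0.le]
    _ ≤ M * ε ^ (s - k) := mul_le_mul_of_nonneg_left
        (rpow_le_rpow_of_exponent_ge hε0 hε1 (by linarith [k.cast_nonneg (α := ℝ)])) hM

end Polynomial

/-- for a real polynomial `p` of degree `m ≥ 1` and `r > 0`, the family
`u_ε(x) = p(x/ε^r)` satisfies the local Zygmund estimates of order `s` iff `s ≤ -rm`. -/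
theorem polynomial_scaled_zygLoc_iff (p : Polynomial ℝ) (m : ℕ) (hm : 1 ≤ m)
    (hdeg : p.natDegree = m) (r : ℝ) (hr : 0 < r) (s : ℝ) :
    ZygLoc1 s (fun ε x => p.eval (x / ε ^ r)) ↔ s ≤ -(r * m) := by
  subst hdeg
  have hrm : 0 < r * p.natDegree := mul_pos hr (by exact_mod_cast hm)
  exact ⟨le_of_zygLoc1_eval_div_rpow hm hr,
    fun hs => zygLoc1_eval_div_rpow hr.le (hs.trans_lt (neg_neg_of_pos hrm)) hs⟩
end
end

section
/- Let 0 < s < 1 and let a : ℝ → ℝ be Hölder continuous of exponent s (i.e., there is C with |a(x)−a(y)| ≤ C|x−y|^s for all x,y) and satisfy 0 < c₁ ≤ a(x) ≤ c₂ for all x ∈ ℝ, with constants c₁, c₂. Define A(x) = ∫₀^x dr/a(r), which is a C¹ strictly increasing bijection of ℝ onto ℝ, and let b ∈ C¹(ℝ) with b' bounded and Hölder continuous of exponent s. Then u(x,t) = b(A^{−1}(A(x) − t)) is a C¹ function on ℝ² solving ∂_t u + a(x) ∂_x u = 0 with u(x,0) = b(x), and its first-order partial derivatives ∂_x u and ∂_t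 u are Hölder continuous of exponent s on ℝ². -/
open MeasureTheory SchwartzMap Filter
open scoped FourierTransform Topology

noncomputable section

/-- `A(x) = ∫₀ˣ dr / a(r)`. -/
def Afun (a : ℝ → ℝ) : ℝ → ℝ := fun x => ∫ t in (0:ℝ)..x, (a t)⁻¹

/-- The solution `u(x,t) = b(A⁻¹(A(x) - t))` of the transport equation, by characteristics. -/
def solU (a b : ℝ → ℝ) : ℝ × ℝ → ℝ :=
  fun p => b (Function.invFun (Afun a) (Afun a p.1 - p.2))

/-- for `a` Hölder continuous of exponent `s ∈ (0,1)` with `0 < c₁ ≤ a ≤ c₂`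
and `b ∈ C¹` with `b'` bounded and Hölder of exponent `s`, the map `A(x) = ∫₀ˣ dr/a(r)` is a
`C¹` strictly increasing bijection of `ℝ` onto `ℝ`, the function
`u(x,t) = b(A⁻¹(A(x) - t))` is a `C¹` solution of `∂_t u + a(x) ∂_x u = 0`, `u(x,0) = b(x)`,
and the first-order partial derivatives of `u` are Hölder continuous of exponent `s`. -/
theorem transport_holder (s : ℝ) (hs0 : 0 < s) (hs1 : s < 1) (a : ℝ → ℝ)
    (haH : ∃ C : ℝ, ∀ x y : ℝ, |a x - a y| ≤ C * |x - y| ^ s)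
    (c₁ c₂ : ℝ) (hc₁ : 0 < c₁) (ha : ∀ x, c₁ ≤ a x ∧ a x ≤ c₂)
    (b : ℝ → ℝ) (hb : ContDiff ℝ 1 b) (hb' : ∃ C : ℝ, ∀ x, |deriv b x| ≤ C)
    (hb'H : ∃ C : ℝ, ∀ x y : ℝ, |deriv b x - deriv b y| ≤ C * |x - y| ^ s) :
    ContDiff ℝ 1 (Afun a) ∧ StrictMono (Afun a) ∧ Function.Bijective (Afun a) ∧
    ContDiff ℝ 1 (solU a b) ∧
    (∀ p : ℝ × ℝ, fderiv ℝ (solU a b) p (0, 1) + a p.1 * fderiv ℝ (solU a b) p (1, 0) = 0) ∧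
    (∀ x : ℝ, solU a b (x, 0) = b x) ∧
    (∃ C : ℝ, ∀ p q : ℝ × ℝ,
      |fderiv ℝ (solU a b) p (1, 0) - fderiv ℝ (solU a b) q (1, 0)| ≤ C * dist p q ^ s) ∧
    (∃ C : ℝ, ∀ p q : ℝ × ℝ,
      |fderiv ℝ (solU a b) p (0, 1) - fderiv ℝ (solU a b) q (0, 1)| ≤ C * dist p q ^ s) := by
  obtain ⟨Ca₀, haH₀⟩ := haH
  set Ca : ℝ := max Ca₀ 0 with hCadef
  have hCa0 : 0 ≤ Ca := le_max_right _ _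
  have haH : ∀ x y : ℝ, |a x - a y| ≤ Ca * |x - y| ^ s := fun x y =>
    (haH₀ x y).trans (mul_le_mul_of_nonneg_right (le_max_left _ _)
      (Real.rpow_nonneg (abs_nonneg _) s))
  have hapos : ∀ x, 0 < a x := fun x => hc₁.trans_le (ha x).1
  have hc₁₂ : c₁ ≤ c₂ := (ha 0).1.trans (ha 0).2
  have hc₂ : 0 < c₂ := hc₁.trans_le hc₁₂
  -- continuity of `a`
  have cont_a : Continuous a := by
    rw [Metric.continuous_iff]
    intro x ε hε
    refine ⟨(ε / (Ca + 1)) ^ (1 / s), Real.rpow_pos_of_pos (by positivity) _, fun y hy => ?_⟩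
    have h2 : |y - x| ^ s ≤ ((ε / (Ca + 1)) ^ (1 / s)) ^ s :=
      Real.rpow_le_rpow (abs_nonneg _) (le_of_lt (by simpa [Real.dist_eq] using hy)) hs0.le
    have h3 : ((ε / (Ca + 1)) ^ (1 / s)) ^ s = ε / (Ca + 1) := by
      rw [← Real.rpow_mul (by positivity), one_div, inv_mul_cancel₀ hs0.ne', Real.rpow_one]
    have key : |a y - a x| ≤ Ca * (ε / (Ca + 1)) := by
      calc |a y - a x| ≤ Ca * |y - x| ^ s := haH y x
        _ ≤ Ca * (ε / (Ca + 1)) := by rw [← h3]; exact mul_le_mul_of_nonneg_left h2 hCa0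
    have hlt : Ca * (ε / (Ca + 1)) < ε := by
      rw [mul_div_assoc', div_lt_iff₀ (by positivity)]
      nlinarith
    rw [Real.dist_eq]
    exact key.trans_lt hlt
  have cont_ia : Continuous fun t => (a t)⁻¹ := cont_a.inv₀ fun x => (hapos x).ne'
  have hInt : ∀ u v : ℝ, IntervalIntegrable (fun t => (a t)⁻¹) volume u v :=
    fun u v => cont_ia.intervalIntegrable u v
  have hA' : ∀ x, HasDerivAt (Afun a) (a x)⁻¹ x := fun x =>
    intervalIntegral.integral_hasDerivAt_right (hInt 0 x)
      (cont_ia.stronglyMeasurable.stronglyMeasurableAtFilter)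
      cont_ia.continuousAt
  have hderivA : deriv (Afun a) = fun x => (a x)⁻¹ := funext fun x => (hA' x).deriv
  have hdiffA : Differentiable ℝ (Afun a) := fun x => (hA' x).differentiableAt
  have hA1 : ContDiff ℝ 1 (Afun a) :=
    contDiff_one_iff_deriv.mpr ⟨hdiffA, hderivA ▸ cont_ia⟩
  have hmono : StrictMono (Afun a) :=
    strictMono_of_deriv_pos fun x => by rw [hderivA]; exact inv_pos.mpr (hapos x)
  have hA_lower : ∀ x : ℝ, 0 ≤ x → x / c₂ ≤ Afun a x := by
    intro x hx
    have h := intervalIntegral.integral_mono_on (μ := volume) (a := (0:ℝ)) (b := x) hx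
      (intervalIntegrable_const (c := c₂⁻¹)) (hInt 0 x)
      (fun t _ => inv_anti₀ (hapos t) (ha t).2)
    simpa [intervalIntegral.integral_const, smul_eq_mul, div_eq_mul_inv, Afun] using h
  have hA_upper_neg : ∀ x : ℝ, x ≤ 0 → Afun a x ≤ x / c₂ := by
    intro x hx
    have h2 : Afun a x = -(∫ t in x..(0:ℝ), (a t)⁻¹) := by
      rw [Afun, ← intervalIntegral.integral_symm]
    have h3 : (0 - x) * c₂⁻¹ ≤ ∫ t in x..(0:ℝ), (a t)⁻¹ := by
      have h := intervalIntegral.integral_mono_on (μ := volume) (a := x) (b := (0:ℝ)) hx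
        (intervalIntegrable_const (c := c₂⁻¹)) (hInt x 0)
        (fun t _ => inv_anti₀ (hapos t) (ha t).2)
      simpa [intervalIntegral.integral_const, smul_eq_mul] using h
    have h4 : x / c₂ = -((0 - x) * c₂⁻¹) := by field_simp; ring
    rw [h2, h4]
    linarith
  have htop : Tendsto (Afun a) atTop atTop :=
    tendsto_atTop_mono' _ (eventually_atTop.2 ⟨0, fun x hx => hA_lower x hx⟩)
      (tendsto_id.atTop_div_const hc₂)
  have hbot : Tendsto (Afun a) atBot atBot :=
    tendsto_atBot_mono' _ (eventually_atBot.2 ⟨0, fun x hx => hA_upper_neg x hx⟩)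
      (tendsto_id.atBot_div_const hc₂)
  have hsurj : Function.Surjective (Afun a) := hA1.continuous.surjective htop hbot
  have hbij : Function.Bijective (Afun a) := ⟨hmono.injective, hsurj⟩
  set e := StrictMono.orderIsoOfSurjective (Afun a) hmono hsurj with he
  set Ainv : ℝ → ℝ := Function.invFun (Afun a) with hAinvdef
  have hright : ∀ y, Afun a (Ainv y) = y := fun y => Function.rightInverse_invFun hsurj y
  have hleft : ∀ x, Ainv (Afun a x) = x := fun x => Function.leftInverse_invFun hmono.injective x
  have hAinv_eq : Ainv = ⇑e.symm := by
    funext y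
    apply hmono.injective
    rw [hright y]
    exact (e.apply_symm_apply y).symm
  have cont_Ainv : Continuous Ainv := by rw [hAinv_eq]; exact e.symm.continuous
  have hAinv' : ∀ y, HasDerivAt Ainv (a (Ainv y)) y := by
    intro y
    have h := HasDerivAt.of_local_left_inverse cont_Ainv.continuousAt (hA' (Ainv y))
      (inv_ne_zero (hapos _).ne') (Eventually.of_forall hright)
    simpa using h
  have hderivAinv : deriv Ainv = fun y => a (Ainv y) := funext fun y => (hAinv' y).deriv
  have hAinv1 : ContDiff ℝ 1 Ainv :=
    contDiff_one_iff_deriv.mpr ⟨fun y => (hAinv' y).differentiableAt,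
      hderivAinv ▸ cont_a.comp cont_Ainv⟩
  set φ : ℝ × ℝ → ℝ := fun p => Afun a p.1 - p.2 with hφdef
  set g : ℝ × ℝ → ℝ := fun p => Ainv (φ p) with hgdef
  have hφ1 : ContDiff ℝ 1 φ := (hA1.comp contDiff_fst).sub contDiff_snd
  have hsolU1 : ContDiff ℝ 1 (solU a b) := hb.comp (hAinv1.comp hφ1)
  have hbd : ∀ z, HasDerivAt b (deriv b z) z := fun z =>
    ((hb.differentiable one_ne_zero) z).hasDerivAt
  set L : ℝ → (ℝ × ℝ →L[ℝ] ℝ) := fun x =>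
    (a x)⁻¹ • (ContinuousLinearMap.fst ℝ ℝ ℝ) - ContinuousLinearMap.snd ℝ ℝ ℝ with hLdef
  have hφ' : ∀ p : ℝ × ℝ, HasFDerivAt φ (L p.1) p := fun p =>
    ((hA' p.1).comp_hasFDerivAt p hasFDerivAt_fst).sub hasFDerivAt_snd
  have hU : ∀ p : ℝ × ℝ, HasFDerivAt (solU a b) ((deriv b (g p) * a (g p)) • L p.1) p := by
    intro p
    have h2 : HasDerivAt (fun w => b (Ainv w)) (deriv b (g p) * a (g p)) (φ p) :=
      (hbd (g p)).comp (φ p) (hAinv' (φ p))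
    exact h2.comp_hasFDerivAt p (hφ' p)
  have hfd : ∀ p : ℝ × ℝ, fderiv ℝ (solU a b) p = (deriv b (g p) * a (g p)) • L p.1 :=
    fun p => (hU p).fderiv
  have hLx : ∀ x : ℝ, L x (1, 0) = (a x)⁻¹ := by
    intro x
    simp [hLdef, ContinuousLinearMap.sub_apply, ContinuousLinearMap.smul_apply]
  have hLt : ∀ x : ℝ, L x (0, 1) = -1 := by
    intro x
    simp [hLdef, ContinuousLinearMap.sub_apply, ContinuousLinearMap.smul_apply]
  have hdx : ∀ p : ℝ × ℝ,
      fderiv ℝ (solU a b) p (1, 0) = deriv b (g p) * a (g p) * (a p.1)⁻¹ := by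
    intro p
    rw [hfd p, ContinuousLinearMap.smul_apply, hLx p.1, smul_eq_mul]
  have hdt : ∀ p : ℝ × ℝ,
      fderiv ℝ (solU a b) p (0, 1) = -(deriv b (g p) * a (g p)) := by
    intro p
    rw [hfd p, ContinuousLinearMap.smul_apply, hLt p.1, smul_eq_mul]
    ring
  have hpde : ∀ p : ℝ × ℝ,
      fderiv ℝ (solU a b) p (0, 1) + a p.1 * fderiv ℝ (solU a b) p (1, 0) = 0 := by
    intro p
    rw [hdx p, hdt p]
    have hne := (hapos p.1).ne'
    field_simp; ring
  have hinit : ∀ x : ℝ, solU a b (x, 0) = b x := by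
    intro x
    show b (Ainv (Afun a x - 0)) = b x
    rw [sub_zero, hleft x]
  -- Hölder continuity of the derivatives
  obtain ⟨Mb, hMb⟩ := hb'
  have hMb0 : 0 ≤ Mb := (abs_nonneg _).trans (hMb 0)
  obtain ⟨Cb₀, hCb₀⟩ := hb'H
  set Cb : ℝ := max Cb₀ 0 with hCbdef
  have hCb0 : 0 ≤ Cb := le_max_right _ _
  have hCb : ∀ x y : ℝ, |deriv b x - deriv b y| ≤ Cb * |x - y| ^ s := fun x y =>
    (hCb₀ x y).trans (mul_le_mul_of_nonneg_right (le_max_left _ _)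
      (Real.rpow_nonneg (abs_nonneg _) _))
  have habs : ∀ x, |a x| ≤ c₂ := fun x => by
    rw [abs_of_pos (hapos x)]; exact (ha x).2
  set F : ℝ → ℝ := fun z => deriv b z * a z with hFdef
  have hFbound : ∀ z, |F z| ≤ Mb * c₂ := by
    intro z
    calc |F z| = |deriv b z| * |a z| := abs_mul _ _
      _ ≤ Mb * c₂ := mul_le_mul (hMb z) (habs z) (abs_nonneg _) hMb0
  set CF : ℝ := Cb * c₂ + Ca * Mb with hCFdef
  have hCF0 : 0 ≤ CF := add_nonneg (mul_nonneg hCb0 hc₂.le) (mul_nonneg hCa0 hMb0)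
  have hFH : ∀ z w : ℝ, |F z - F w| ≤ CF * |z - w| ^ s := by
    intro z w
    have h1 : F z - F w = (deriv b z - deriv b w) * a z + deriv b w * (a z - a w) := by
      simp only [hFdef]; ring
    rw [h1]
    calc |(deriv b z - deriv b w) * a z + deriv b w * (a z - a w)|
        ≤ |(deriv b z - deriv b w) * a z| + |deriv b w * (a z - a w)| := abs_add_le _ _
      _ = |deriv b z - deriv b w| * |a z| + |deriv b w| * |a z - a w| := by
          rw [abs_mul, abs_mul]
      _ ≤ (Cb * |z - w| ^ s) * c₂ + Mb * (Ca * |z - w| ^ s) := by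
          refine add_le_add
            (mul_le_mul (hCb z w) (habs z) (abs_nonneg _)
              (mul_nonneg hCb0 (Real.rpow_nonneg (abs_nonneg _) _)))
            (mul_le_mul (hMb w) (haH z w) (abs_nonneg _) hMb0)
      _ = CF * |z - w| ^ s := by rw [hCFdef]; ring
  have hinva : ∀ x : ℝ, |(a x)⁻¹| ≤ c₁⁻¹ := fun x => by
    rw [abs_of_pos (inv_pos.mpr (hapos x))]
    exact inv_anti₀ hc₁ (ha x).1
  have hAinv_lip : ∀ y w : ℝ, |Ainv y - Ainv w| ≤ c₂ * |y - w| := by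
    intro y w
    have h := Convex.norm_image_sub_le_of_norm_hasDerivWithin_le
      (f := Ainv) (f' := fun y => a (Ainv y)) (s := Set.univ) (C := c₂)
      (fun u _ => (hAinv' u).hasDerivWithinAt)
      (fun u _ => by simpa [Real.norm_eq_abs] using habs (Ainv u))
      convex_univ (Set.mem_univ w) (Set.mem_univ y)
    simpa [Real.norm_eq_abs] using h
  have hA_lip : ∀ x y : ℝ, |Afun a x - Afun a y| ≤ c₁⁻¹ * |x - y| := by
    intro x y
    have h := Convex.norm_image_sub_le_of_norm_hasDerivWithin_le
      (f := Afun a) (f' := fun t => (a t)⁻¹) (s := Set.univ) (C := c₁⁻¹)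
      (fun u _ => (hA' u).hasDerivWithinAt)
      (fun u _ => by rw [Real.norm_eq_abs]; exact hinva u)
      convex_univ (Set.mem_univ y) (Set.mem_univ x)
    simpa [Real.norm_eq_abs] using h
  have hfst : ∀ p q : ℝ × ℝ, |p.1 - q.1| ≤ dist p q := by
    intro p q
    calc |p.1 - q.1| = dist p.1 q.1 := (Real.dist_eq _ _).symm
      _ ≤ dist p q := by rw [Prod.dist_eq]; exact le_max_left _ _
  have hsnd : ∀ p q : ℝ × ℝ, |p.2 - q.2| ≤ dist p q := by
    intro p q
    calc |p.2 - q.2| = dist p.2 q.2 := (Real.dist_eq _ _).symm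
      _ ≤ dist p q := by rw [Prod.dist_eq]; exact le_max_right _ _
  set Lg : ℝ := c₂ * (c₁⁻¹ + 1) with hLgdef
  have hic₁ : 0 ≤ c₁⁻¹ := inv_nonneg.mpr hc₁.le
  have hLg0 : 0 ≤ Lg := mul_nonneg hc₂.le (by linarith)
  have hgLip : ∀ p q : ℝ × ℝ, |g p - g q| ≤ Lg * dist p q := by
    intro p q
    have h1 : |g p - g q| ≤ c₂ * |φ p - φ q| := hAinv_lip _ _
    have h2 : |φ p - φ q| ≤ c₁⁻¹ * |p.1 - q.1| + |p.2 - q.2| := by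
      have heq : φ p - φ q = (Afun a p.1 - Afun a q.1) - (p.2 - q.2) := by
        simp only [hφdef]; ring
      rw [heq]
      calc |(Afun a p.1 - Afun a q.1) - (p.2 - q.2)|
          ≤ |Afun a p.1 - Afun a q.1| + |p.2 - q.2| := abs_sub _ _
        _ ≤ c₁⁻¹ * |p.1 - q.1| + |p.2 - q.2| := add_le_add (hA_lip _ _) le_rfl
    have h3 : |φ p - φ q| ≤ (c₁⁻¹ + 1) * dist p q := by
      calc |φ p - φ q| ≤ c₁⁻¹ * |p.1 - q.1| + |p.2 - q.2| := h2
        _ ≤ c₁⁻¹ * dist p q + dist p q :=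
            add_le_add (mul_le_mul_of_nonneg_left (hfst p q) hic₁) (hsnd p q)
        _ = (c₁⁻¹ + 1) * dist p q := by ring
    calc |g p - g q| ≤ c₂ * |φ p - φ q| := h1
      _ ≤ c₂ * ((c₁⁻¹ + 1) * dist p q) := mul_le_mul_of_nonneg_left h3 hc₂.le
      _ = Lg * dist p q := by rw [hLgdef]; ring
  have hFg : ∀ p q : ℝ × ℝ, |F (g p) - F (g q)| ≤ CF * Lg ^ s * dist p q ^ s := by
    intro p q
    calc |F (g p) - F (g q)| ≤ CF * |g p - g q| ^ s := hFH _ _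
      _ ≤ CF * (Lg * dist p q) ^ s := by
          refine mul_le_mul_of_nonneg_left ?_ hCF0
          exact Real.rpow_le_rpow (abs_nonneg _) (hgLip p q) hs0.le
      _ = CF * Lg ^ s * dist p q ^ s := by
          rw [Real.mul_rpow hLg0 dist_nonneg]; ring
  have hinvdiff : ∀ x y : ℝ, |(a x)⁻¹ - (a y)⁻¹| ≤ Ca * c₁⁻¹ * c₁⁻¹ * |x - y| ^ s := by
    intro x y
    have h1 : (a x)⁻¹ - (a y)⁻¹ = (a y - a x) * ((a x)⁻¹ * (a y)⁻¹) := by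
      have hx := (hapos x).ne'
      have hy := (hapos y).ne'
      field_simp
    rw [h1, abs_mul, abs_mul]
    calc |a y - a x| * (|(a x)⁻¹| * |(a y)⁻¹|)
        ≤ (Ca * |x - y| ^ s) * (c₁⁻¹ * c₁⁻¹) := by
          refine mul_le_mul ?_ ?_ (mul_nonneg (abs_nonneg _) (abs_nonneg _))
            (mul_nonneg hCa0 (Real.rpow_nonneg (abs_nonneg _) _))
          · simpa [abs_sub_comm] using haH y x
          · exact mul_le_mul (hinva x) (hinva y) (abs_nonneg _) hic₁
      _ = Ca * c₁⁻¹ * c₁⁻¹ * |x - y| ^ s := by ring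
  refine ⟨hA1, hmono, hbij, hsolU1, hpde, hinit,
    ⟨CF * Lg ^ s * c₁⁻¹ + Mb * c₂ * (Ca * c₁⁻¹ * c₁⁻¹), ?_⟩, ⟨CF * Lg ^ s, ?_⟩⟩
  · intro p q
    rw [hdx p, hdx q]
    have key : deriv b (g p) * a (g p) * (a p.1)⁻¹ - deriv b (g q) * a (g q) * (a q.1)⁻¹
        = (F (g p) - F (g q)) * (a p.1)⁻¹ + F (g q) * ((a p.1)⁻¹ - (a q.1)⁻¹) := by
      simp only [hFdef]; ring
    rw [key]
    have hds : 0 ≤ dist p q ^ s := Real.rpow_nonneg dist_nonneg _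
    have e1 : |(F (g p) - F (g q)) * (a p.1)⁻¹| ≤ (CF * Lg ^ s * dist p q ^ s) * c₁⁻¹ := by
      rw [abs_mul]
      exact mul_le_mul (hFg p q) (hinva p.1) (abs_nonneg _)
        (mul_nonneg (mul_nonneg hCF0 (Real.rpow_nonneg hLg0 _)) hds)
    have e3 : |p.1 - q.1| ^ s ≤ dist p q ^ s :=
      Real.rpow_le_rpow (abs_nonneg _) (hfst p q) hs0.le
    have e2 : |F (g q) * ((a p.1)⁻¹ - (a q.1)⁻¹)|
        ≤ (Mb * c₂) * (Ca * c₁⁻¹ * c₁⁻¹ * dist p q ^ s) := by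
      rw [abs_mul]
      refine mul_le_mul (hFbound _) ?_ (abs_nonneg _) (mul_nonneg hMb0 hc₂.le)
      calc |(a p.1)⁻¹ - (a q.1)⁻¹| ≤ Ca * c₁⁻¹ * c₁⁻¹ * |p.1 - q.1| ^ s := hinvdiff _ _
        _ ≤ Ca * c₁⁻¹ * c₁⁻¹ * dist p q ^ s :=
            mul_le_mul_of_nonneg_left e3 (mul_nonneg (mul_nonneg hCa0 hic₁) hic₁)
    calc |(F (g p) - F (g q)) * (a p.1)⁻¹ + F (g q) * ((a p.1)⁻¹ - (a q.1)⁻¹)|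
        ≤ |(F (g p) - F (g q)) * (a p.1)⁻¹| + |F (g q) * ((a p.1)⁻¹ - (a q.1)⁻¹)| := abs_add_le _ _
      _ ≤ (CF * Lg ^ s * dist p q ^ s) * c₁⁻¹ + (Mb * c₂) * (Ca * c₁⁻¹ * c₁⁻¹ * dist p q ^ s) :=
          add_le_add e1 e2
      _ = (CF * Lg ^ s * c₁⁻¹ + Mb * c₂ * (Ca * c₁⁻¹ * c₁⁻¹)) * dist p q ^ s := by ring
  · intro p q
    rw [hdt p, hdt q]
    have heq : -(deriv b (g p) * a (g p)) - -(deriv b (g q) * a (g q))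
        = -(F (g p) - F (g q)) := by simp only [hFdef]; ring
    rw [heq, abs_neg]
    exact hFg p q
end
end

section
/- Let s ≥ −1 and let (a_ε)_{ε∈(0,1]} be a family of smooth complex-valued functions on ℝ satisfying the local Zygmund estimates of order s on ℝ, such that the real part of a_ε is locally uniformly bounded: for every compact K ⊂ ℝ there exist C > 0 and ε₀ > 0 with sup_{x∈K} |Re a_ε(x)| ≤ C for all 0 < ε < ε₀. Let t ∈ ℝ and let (b_ε)_{ε∈(0,1]} be complex numbers satisfying, as ε → 0: |b_ε| = O(1) if t > 0, |b_ε| = O(log(1/ε)) if t = 0, and |b_ε| = O(ε^t) if t < 0. Define u_ε(x) = b_ε · exp(∫₀^x a_ε(y) dy), so that u_ε' = a_ε u_ε and u_ε(0) = b_ε. Then the family (u_ε)_{ε∈(0,1]} satisfies the local Zygmund estimates on ℝ of order r, where r = s + 1 if t > 0 and r = t if t < 0; if t = 0, it satisfies the local Zygmund estimates of order 0 when s > −1, and of order −σ for every σ > 0 when s = −1. -/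
open MeasureTheory SchwartzMap Filter
open scoped FourierTransform Topology

noncomputable section

namespace OdeZyg

open Set
open scoped ContDiff

/-! ### Rate functions `ε ↦ log(1/ε)^p ε^q` and comparison machinery -/

def LL (ε : ℝ) : ℝ := Real.log (1/ε)

def w (p : ℕ) (q : ℝ) (ε : ℝ) : ℝ := LL ε ^ p * ε ^ q

def Dom (g h : ℝ → ℝ) : Prop := ∃ C, 0 ≤ C ∧ ∀ᶠ ε in 𝓝[>] (0:ℝ), g ε ≤ C * h ε

def Bd (f : ℝ → ℝ → ℂ) (g : ℝ → ℝ) (K : Set ℝ) : Prop :=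
  ∃ C, 0 ≤ C ∧ ∀ᶠ ε in 𝓝[>] (0:ℝ), ∀ x ∈ K, ‖f ε x‖ ≤ C * g ε

lemma ev_Ioo {δ : ℝ} (hδ : 0 < δ) : ∀ᶠ ε in 𝓝[>] (0:ℝ), ε ∈ Ioo 0 δ :=
  Ioo_mem_nhdsGT_of_mem ⟨le_refl 0, hδ⟩

lemma ev_Ioc : ∀ᶠ ε in 𝓝[>] (0:ℝ), ε ∈ Set.Ioc (0:ℝ) 1 :=
  (ev_Ioo one_pos).mono fun ε h => ⟨h.1, h.2.le⟩

lemma LL_ge_one : ∀ᶠ ε in 𝓝[>] (0:ℝ), 1 ≤ LL ε := by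
  filter_upwards [ev_Ioo (Real.exp_pos (-1))] with ε hε
  have h1 : Real.log ε ≤ -1 := by
    have := Real.log_le_log hε.1 hε.2.le
    rwa [Real.log_exp] at this
  have : LL ε = -Real.log ε := by rw [LL, one_div, Real.log_inv]
  linarith

lemma w_le_one {δ : ℝ} (hδ : 0 < δ) (p : ℕ) :
    ∀ᶠ ε in 𝓝[>] (0:ℝ), LL ε ^ p * ε ^ δ ≤ 1 := by
  have h := (isLittleO_abs_log_rpow_rpow_nhdsGT_zero (p : ℝ)
    (neg_lt_zero.2 hδ)).def one_pos
  filter_upwards [h, ev_Ioo one_pos] with ε h1 h2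
  have hε : 0 < ε := h2.1
  have hlog : Real.log ε ≤ 0 := Real.log_nonpos hε.le h2.2.le
  have hLL : LL ε = |Real.log ε| := by
    rw [LL, one_div, Real.log_inv, abs_of_nonpos hlog]
  rw [Real.norm_eq_abs, Real.norm_eq_abs, abs_of_nonneg (by positivity),
    abs_of_nonneg (Real.rpow_nonneg hε.le _), one_mul, Real.rpow_natCast] at h1
  have h3 : LL ε ^ p ≤ ε ^ (-δ) := by rw [hLL]; exact h1
  calc LL ε ^ p * ε ^ δ ≤ ε ^ (-δ) * ε ^ δ := by
        apply mul_le_mul_of_nonneg_right h3 (Real.rpow_nonneg hε.le _)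
    _ = 1 := by rw [← Real.rpow_add hε]; simp

lemma dom_w {p p' : ℕ} {q q' : ℝ} (h : q' < q ∨ (q' ≤ q ∧ p ≤ p')) :
    Dom (w p q) (w p' q') := by
  refine ⟨1, zero_le_one, ?_⟩
  rcases h with h | ⟨hq, hp⟩
  · filter_upwards [w_le_one (sub_pos.2 h) p, LL_ge_one, ev_Ioo one_pos] with ε h1 h2 h3
    have hε : 0 < ε := h3.1
    have e1 : w p q ε = (LL ε ^ p * ε ^ (q - q')) * ε ^ q' := by
      rw [w, mul_assoc, ← Real.rpow_add hε, sub_add_cancel]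
    have e2 : (LL ε ^ p * ε ^ (q - q')) * ε ^ q' ≤ 1 * ε ^ q' :=
      mul_le_mul_of_nonneg_right h1 (Real.rpow_nonneg hε.le _)
    have e3 : (1:ℝ) ≤ LL ε ^ p' := one_le_pow₀ h2
    have e4 : (1:ℝ) * ε ^ q' ≤ LL ε ^ p' * ε ^ q' :=
      mul_le_mul_of_nonneg_right e3 (Real.rpow_nonneg hε.le _)
    rw [one_mul, w]
    calc w p q ε ≤ 1 * ε ^ q' := e1 ▸ e2
      _ ≤ _ := by rw [one_mul]; exact (one_mul (ε ^ q')) ▸ e4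
  · filter_upwards [LL_ge_one, ev_Ioo one_pos] with ε h2 h3
    rw [one_mul, w, w]
    have e1 : LL ε ^ p ≤ LL ε ^ p' := pow_le_pow_right₀ h2 hp
    have e2 : ε ^ q ≤ ε ^ q' := Real.rpow_le_rpow_of_exponent_ge h3.1 h3.2.le hq
    exact mul_le_mul e1 e2 (Real.rpow_nonneg h3.1.le _) (by positivity)

lemma dom_w_mul {p1 p2 p' : ℕ} {q1 q2 q' : ℝ}
    (h : q' < q1 + q2 ∨ (q' ≤ q1 + q2 ∧ p1 + p2 ≤ p')) :
    Dom (fun ε => w p1 q1 ε * w p2 q2 ε) (w p' q') := by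
  obtain ⟨C, hC0, hC⟩ := dom_w (p := p1 + p2) (q := q1 + q2) (p' := p') (q' := q') h
  refine ⟨C, hC0, ?_⟩
  filter_upwards [hC, ev_Ioo one_pos] with ε h1 hε
  have : w p1 q1 ε * w p2 q2 ε = w (p1 + p2) (q1 + q2) ε := by
    simp only [w]; rw [pow_add, Real.rpow_add hε.1]; ring
  rw [this]; exact h1

lemma Bd.of_dom {f : ℝ → ℝ → ℂ} {g h : ℝ → ℝ} {K : Set ℝ}
    (hf : Bd f g K) (hgh : Dom g h) : Bd f h K := by
  obtain ⟨C, hC0, hC⟩ := hf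
  obtain ⟨D, hD0, hD⟩ := hgh
  refine ⟨C * D, mul_nonneg hC0 hD0, ?_⟩
  filter_upwards [hC, hD] with ε h1 h2 x hx
  calc ‖f ε x‖ ≤ C * g ε := h1 x hx
    _ ≤ C * (D * h ε) := mul_le_mul_of_nonneg_left h2 hC0
    _ = C * D * h ε := by ring

lemma Bd.mono_set {f : ℝ → ℝ → ℂ} {g : ℝ → ℝ} {K K' : Set ℝ}
    (hf : Bd f g K') (hKK : K ⊆ K') : Bd f g K := by
  obtain ⟨C, hC0, hC⟩ := hf
  exact ⟨C, hC0, hC.mono fun ε h x hx => h x (hKK hx)⟩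

/-! ### The Leibniz induction engine -/

lemma induction_bd {a u : ℝ → ℝ → ℂ} {K : Set ℝ}
    (hus : ∀ ε ∈ Set.Ioc (0:ℝ) 1, ContDiff ℝ (((⊤ : ℕ∞)) : WithTop ℕ∞) (u ε))
    (has : ∀ ε ∈ Set.Ioc (0:ℝ) 1, ContDiff ℝ (((⊤ : ℕ∞)) : WithTop ℕ∞) (a ε))
    (hder : ∀ ε ∈ Set.Ioc (0:ℝ) 1, deriv (u ε) = fun x => a ε x * u ε x)
    (φ g : ℕ → ℝ → ℝ)
    (ha_bd : ∀ j, Bd (fun ε x => iteratedDeriv j (a ε) x) (φ j) K)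
    (hbase : Bd u (g 0) K)
    (hclos : ∀ j m, Dom (fun ε => φ j ε * g m ε) (g (j + m + 1))) :
    ∀ k, Bd (fun ε x => iteratedDeriv k (u ε) x) (g k) K := by
  intro k
  induction k using Nat.strong_induction_on with
  | _ k IH =>
    rcases k with _ | n
    · simpa [iteratedDeriv_zero] using hbase
    · choose CA hCA0 hCA using ha_bd
      choose CU hCU0 hCU using fun i : Fin (n+1) => IH (n - (i : ℕ)) (by omega)
      have hclos' : ∀ i : Fin (n+1),
          Dom (fun ε => φ (i : ℕ) ε * g (n - (i : ℕ)) ε) (g (n + 1)) := by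
        intro i
        have h := hclos (i : ℕ) (n - (i : ℕ))
        have he : (i : ℕ) + (n - (i : ℕ)) + 1 = n + 1 := by omega
        rwa [he] at h
      choose CD hCD0 hCD using hclos'
      refine ⟨∑ i : Fin (n+1), (n.choose i : ℝ) * (CA i * (CU i * CD i)),
        Finset.sum_nonneg fun i _ => by
          have := hCA0 i; have := hCU0 i; have := hCD0 i; positivity, ?_⟩
      have hev1 : ∀ᶠ ε in 𝓝[>] (0:ℝ), ∀ i : Fin (n+1), ∀ x ∈ K,
          ‖iteratedDeriv (i : ℕ) (a ε) x‖ ≤ CA i * φ i ε :=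
        eventually_all.2 fun i => hCA i
      have hev2 : ∀ᶠ ε in 𝓝[>] (0:ℝ), ∀ i : Fin (n+1), ∀ x ∈ K,
          ‖iteratedDeriv (n - (i : ℕ)) (u ε) x‖ ≤ CU i * g (n - (i : ℕ)) ε :=
        eventually_all.2 fun i => hCU i
      have hev3 : ∀ᶠ ε in 𝓝[>] (0:ℝ), ∀ i : Fin (n+1),
          φ (i : ℕ) ε * g (n - (i : ℕ)) ε ≤ CD i * g (n + 1) ε :=
        eventually_all.2 fun i => hCD i
      filter_upwards [hev1, hev2, hev3, ev_Ioc] with ε h1 h2 h3 hε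
      intro x hx
      have hu' : iteratedDeriv (n + 1) (u ε) x
          = iteratedDeriv n (fun y => a ε y * u ε y) x := by
        rw [iteratedDeriv_succ', hder ε hε]
      rw [hu', ← norm_iteratedFDeriv_eq_norm_iteratedDeriv]
      calc ‖iteratedFDeriv ℝ n (fun y => a ε y * u ε y) x‖
          ≤ ∑ i ∈ Finset.range (n+1), (n.choose i : ℝ) * ‖iteratedFDeriv ℝ i (a ε) x‖ *
              ‖iteratedFDeriv ℝ (n - i) (u ε) x‖ :=
            norm_iteratedFDeriv_mul_le (has ε hε) (hus ε hε) x (by exact_mod_cast le_top)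
        _ = ∑ i : Fin (n+1), (n.choose (i:ℕ) : ℝ) * ‖iteratedDeriv (i:ℕ) (a ε) x‖ *
              ‖iteratedDeriv (n - (i:ℕ)) (u ε) x‖ := by
            rw [← Finset.sum_range (fun i => (n.choose i : ℝ) * ‖iteratedDeriv i (a ε) x‖ *
              ‖iteratedDeriv (n - i) (u ε) x‖)]
            simp only [norm_iteratedFDeriv_eq_norm_iteratedDeriv]
        _ ≤ ∑ i : Fin (n+1), (n.choose (i:ℕ) : ℝ) * (CA i * (CU i * CD i)) * g (n+1) ε := by
            refine Finset.sum_le_sum fun i _ => ?_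
            have p1 : ‖iteratedDeriv (i:ℕ) (a ε) x‖ * ‖iteratedDeriv (n - (i:ℕ)) (u ε) x‖
                ≤ (CA i * φ (i:ℕ) ε) * (CU i * g (n - (i:ℕ)) ε) :=
              mul_le_mul (h1 i x hx) (h2 i x hx) (norm_nonneg _)
                ((norm_nonneg _).trans (h1 i x hx))
            have p2 : (CA i * CU i) * (φ (i:ℕ) ε * g (n - (i:ℕ)) ε)
                ≤ (CA i * CU i) * (CD i * g (n+1) ε) :=
              mul_le_mul_of_nonneg_left (h3 i) (mul_nonneg (hCA0 _) (hCU0 _))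
            calc (n.choose (i:ℕ) : ℝ) * ‖iteratedDeriv (i:ℕ) (a ε) x‖ *
                  ‖iteratedDeriv (n - (i:ℕ)) (u ε) x‖
                = (n.choose (i:ℕ) : ℝ) * (‖iteratedDeriv (i:ℕ) (a ε) x‖ *
                  ‖iteratedDeriv (n - (i:ℕ)) (u ε) x‖) := by ring
              _ ≤ (n.choose (i:ℕ) : ℝ) * ((CA i * φ (i:ℕ) ε) * (CU i * g (n - (i:ℕ)) ε)) :=
                  mul_le_mul_of_nonneg_left p1 (by positivity)
              _ = (n.choose (i:ℕ) : ℝ) * ((CA i * CU i) * (φ (i:ℕ) ε * g (n - (i:ℕ)) ε)) := by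
                  ring
              _ ≤ (n.choose (i:ℕ) : ℝ) * ((CA i * CU i) * (CD i * g (n+1) ε)) :=
                  mul_le_mul_of_nonneg_left p2 (by positivity)
              _ = (n.choose (i:ℕ) : ℝ) * (CA i * (CU i * CD i)) * g (n+1) ε := by ring
        _ = (∑ i : Fin (n+1), (n.choose (i:ℕ) : ℝ) * (CA i * (CU i * CD i))) * g (n+1) ε := by
            rw [Finset.sum_mul]

/-! ### Properties of `u_ε = b_ε exp(∫₀ˣ a_ε)` -/

section UProps
variable {a : ℝ → ℝ → ℂ} {b : ℝ → ℂ} {ε : ℝ}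

lemma F_hasDerivAt (hac : Continuous (a ε)) (x : ℝ) :
    HasDerivAt (fun x => ∫ y in (0:ℝ)..x, a ε y) (a ε x) x :=
  (hac.integral_hasStrictDerivAt 0 x).hasDerivAt

lemma F_smooth (ha : ContDiff ℝ (((⊤ : ℕ∞)) : WithTop ℕ∞) (a ε)) :
    ContDiff ℝ (((⊤ : ℕ∞)) : WithTop ℕ∞) (fun x => ∫ y in (0:ℝ)..x, a ε y) := by
  refine contDiff_infty_iff_deriv.2 ⟨fun x => (F_hasDerivAt ha.continuous x).differentiableAt, ?_⟩
  have : deriv (fun x => ∫ y in (0:ℝ)..x, a ε y) = a ε :=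
    funext fun x => (F_hasDerivAt ha.continuous x).deriv
  rw [this]
  exact ha

lemma u_smooth (ha : ContDiff ℝ (((⊤ : ℕ∞)) : WithTop ℕ∞) (a ε)) :
    ContDiff ℝ (((⊤ : ℕ∞)) : WithTop ℕ∞)
      (fun x => b ε * Complex.exp (∫ y in (0:ℝ)..x, a ε y)) :=
  contDiff_const.mul (Complex.contDiff_exp.comp (F_smooth ha))

lemma u_deriv (ha : ContDiff ℝ (((⊤ : ℕ∞)) : WithTop ℕ∞) (a ε)) :
    deriv (fun x => b ε * Complex.exp (∫ y in (0:ℝ)..x, a ε y))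
      = fun x => a ε x * (b ε * Complex.exp (∫ y in (0:ℝ)..x, a ε y)) := by
  funext x
  have h1 : HasDerivAt (fun x => b ε * Complex.exp (∫ y in (0:ℝ)..x, a ε y))
      (b ε * (Complex.exp (∫ y in (0:ℝ)..x, a ε y) * a ε x)) x :=
    ((F_hasDerivAt ha.continuous x).cexp).const_mul (b ε)
  rw [h1.deriv]; ring

lemma u_norm (hac : Continuous (a ε)) (x : ℝ) :
    ‖b ε * Complex.exp (∫ y in (0:ℝ)..x, a ε y)‖
      = ‖b ε‖ * Real.exp (∫ y in (0:ℝ)..x, (a ε y).re) := by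
  rw [norm_mul, Complex.norm_exp]
  congr 1
  have h := Complex.reCLM.intervalIntegral_comp_comm
    (hac.intervalIntegrable (μ := MeasureTheory.volume) 0 x)
  simpa using h.symm

end UProps

/-- Bounds on derivatives of `a` from the Zygmund hypothesis, in `w`-form. -/
lemma a_bd {s : ℝ} {a : ℝ → ℝ → ℂ} (haz : ZygLoc1 s a) {K : Set ℝ} (hK : IsCompact K)
    (j : ℕ) :
    Bd (fun ε x => iteratedDeriv j (a ε) x)
      (w (if (j:ℝ) = s then 1 else 0) (min 0 (s - j))) K := by
  rcases lt_trichotomy ((j:ℝ)) s with h | h | h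
  · obtain ⟨C, hC⟩ := (haz K hK j).1 h
    refine ⟨max C 0, le_max_right _ _, ?_⟩
    have e1 : (if (j:ℝ) = s then 1 else 0) = 0 := if_neg (ne_of_lt h)
    have e2 : min 0 (s - (j:ℝ)) = 0 := min_eq_left (by linarith)
    filter_upwards [hC] with ε h1 x hx
    rw [e1, e2, w, pow_zero, Real.rpow_zero, mul_one, mul_one]
    exact (h1 x hx).trans (le_max_left _ _)
  · obtain ⟨C, hC⟩ := (haz K hK j).2.1 h
    refine ⟨max C 0, le_max_right _ _, ?_⟩
    have e1 : (if (j:ℝ) = s then 1 else 0) = 1 := if_pos h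
    have e2 : min 0 (s - (j:ℝ)) = 0 := by rw [h]; simp
    filter_upwards [hC, LL_ge_one] with ε h1 h2 x hx
    rw [e1, e2, w, pow_one, Real.rpow_zero, mul_one]
    calc ‖iteratedDeriv j (a ε) x‖ ≤ C * Real.log (1/ε) := h1 x hx
      _ = C * LL ε := rfl
      _ ≤ max C 0 * LL ε := mul_le_mul_of_nonneg_right (le_max_left _ _) (by linarith)
  · obtain ⟨C, hC⟩ := (haz K hK j).2.2 h
    refine ⟨max C 0, le_max_right _ _, ?_⟩
    have e1 : (if (j:ℝ) = s then 1 else 0) = 0 := if_neg (ne_of_gt h)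
    have e2 : min 0 (s - (j:ℝ)) = s - j := min_eq_right (by linarith)
    filter_upwards [hC, ev_Ioo one_pos] with ε h1 h2 x hx
    rw [e1, e2, w, pow_zero, one_mul]
    calc ‖iteratedDeriv j (a ε) x‖ ≤ C * ε ^ (s - (j:ℕ)) := h1 x hx
      _ ≤ max C 0 * ε ^ (s - (j:ℕ)) :=
        mul_le_mul_of_nonneg_right (le_max_left _ _) (Real.rpow_nonneg h2.1.le _)

/-- Base estimate: `‖u_ε‖ ≤ C β ε` on `[-R, R]` from real-part bound and `‖b_ε‖ ≤ C β ε`. -/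
lemma base_bd {a : ℝ → ℝ → ℂ} {b : ℝ → ℂ} {β : ℝ → ℝ}
    (hasmooth : ∀ ε ∈ Set.Ioc (0:ℝ) 1, ContDiff ℝ (((⊤ : ℕ∞)) : WithTop ℕ∞) (a ε))
    (hre : ∀ K : Set ℝ, IsCompact K → ∃ C : ℝ, ∃ ε₀ : ℝ, 0 < ε₀ ∧
      ∀ ε : ℝ, 0 < ε → ε < ε₀ → ∀ x ∈ K, |(a ε x).re| ≤ C)
    (hb : ∃ C, 0 ≤ C ∧ ∀ᶠ ε in 𝓝[>] (0:ℝ), ‖b ε‖ ≤ C * β ε)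
    {R : ℝ} (hR : 0 ≤ R) :
    Bd (fun ε x => b ε * Complex.exp (∫ y in (0:ℝ)..x, a ε y)) β (Icc (-R) R) := by
  obtain ⟨C0, ε₀, hε₀, hC0⟩ := hre (Icc (-R) R) isCompact_Icc
  obtain ⟨Cb, hCb0, hCb⟩ := hb
  refine ⟨Cb * Real.exp ((max C0 0) * R), by positivity, ?_⟩
  filter_upwards [hCb, ev_Ioo (lt_min hε₀ one_pos)] with ε h1 h2 x hx
  have hε1 : ε ∈ Set.Ioc (0:ℝ) 1 := ⟨h2.1, (h2.2.trans_le (min_le_right _ _)).le⟩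
  have hac : Continuous (a ε) := (hasmooth ε hε1).continuous
  rw [u_norm hac x]
  have hsub : Set.uIoc (0:ℝ) x ⊆ Icc (-R) R := by
    refine Set.uIoc_subset_uIcc.trans (Set.uIcc_subset_Icc ?_ hx)
    exact ⟨neg_nonpos.2 hR, hR⟩
  have hint : |∫ y in (0:ℝ)..x, (a ε y).re| ≤ max C0 0 * |x - 0| := by
    rw [← Real.norm_eq_abs]
    refine intervalIntegral.norm_integral_le_of_norm_le_const fun y hy => ?_
    rw [Real.norm_eq_abs]
    exact (hC0 ε h2.1 (h2.2.trans_le (min_le_left _ _)) y (hsub hy)).trans (le_max_left _ _)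
  have hxR : |x - 0| ≤ R := by
    rw [sub_zero, abs_le]; exact ⟨hx.1, hx.2⟩
  have hint2 : (∫ y in (0:ℝ)..x, (a ε y).re) ≤ max C0 0 * R := by
    calc (∫ y in (0:ℝ)..x, (a ε y).re) ≤ |∫ y in (0:ℝ)..x, (a ε y).re| := le_abs_self _
      _ ≤ max C0 0 * |x - 0| := hint
      _ ≤ max C0 0 * R := mul_le_mul_of_nonneg_left hxR (le_max_right _ _)
  calc ‖b ε‖ * Real.exp (∫ y in (0:ℝ)..x, (a ε y).re)
      ≤ (Cb * β ε) * Real.exp (max C0 0 * R) := by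
        refine mul_le_mul h1 (Real.exp_le_exp.2 hint2) (Real.exp_pos _).le
          ((norm_nonneg _).trans h1)
    _ = Cb * Real.exp (max C0 0 * R) * β ε := by ring

/-! ### The master lemma -/

lemma master {s : ℝ} {a : ℝ → ℝ → ℂ}
    (hasmooth : ∀ ε ∈ Set.Ioc (0:ℝ) 1, ContDiff ℝ (((⊤ : ℕ∞)) : WithTop ℕ∞) (a ε))
    (haz : ZygLoc1 s a)
    (hre : ∀ K : Set ℝ, IsCompact K → ∃ C : ℝ, ∃ ε₀ : ℝ, 0 < ε₀ ∧
      ∀ ε : ℝ, 0 < ε → ε < ε₀ → ∀ x ∈ K, |(a ε x).re| ≤ C)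
    {b : ℝ → ℂ} (P : ℕ → ℕ) (Q : ℕ → ℝ)
    (hb : ∃ C, 0 ≤ C ∧ ∀ᶠ ε in 𝓝[>] (0:ℝ), ‖b ε‖ ≤ C * w (P 0) (Q 0) ε)
    (hclos : ∀ j m : ℕ, Q (j+m+1) < min 0 (s - j) + Q m ∨
      (Q (j+m+1) ≤ min 0 (s - j) + Q m ∧
        (if (j:ℝ) = s then 1 else 0) + P m ≤ P (j+m+1)))
    {K : Set ℝ} (hK : IsCompact K) (k : ℕ) :
    Bd (fun ε x => iteratedDeriv k
      (fun x => b ε * Complex.exp (∫ y in (0:ℝ)..x, a ε y)) x) (w (P k) (Q k)) K := by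
  obtain ⟨R0, hR0⟩ := hK.isBounded.subset_closedBall 0
  have hKR : K ⊆ Icc (-(max R0 0)) (max R0 0) := by
    intro x hx
    have h := hR0 hx
    rw [Real.closedBall_eq_Icc] at h
    constructor
    · have := h.1; have := le_max_left R0 0; linarith [h.1]
    · have := h.2; have := le_max_left R0 0; linarith [h.2, le_max_left R0 0]
  refine Bd.mono_set ?_ hKR
  refine induction_bd (a := a) ?_ ?_ ?_
    (fun j => w (if (j:ℝ) = s then 1 else 0) (min 0 (s - j)))
    (fun k => w (P k) (Q k)) ?_ ?_ ?_ k
  · exact fun ε hε => u_smooth ((hasmooth ε hε).of_le le_rfl)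
  · exact fun ε hε => (hasmooth ε hε).of_le le_rfl
  · exact fun ε hε => u_deriv ((hasmooth ε hε).of_le le_rfl)
  · exact fun j => a_bd haz isCompact_Icc j
  · exact base_bd hasmooth hre hb (le_max_right R0 0)
  · exact fun j m => dom_w_mul (hclos j m)

/-! ### Rate exponents for the four regimes, and closure of the recursion -/

def P1 (s : ℝ) (k : ℕ) : ℕ := if 1 ≤ k ∧ (k:ℝ) = s + 1 then 1 else 0
def Q1 (s : ℝ) (k : ℕ) : ℝ := min 0 (s + 1 - k)
def Q2 (t : ℝ) (k : ℕ) : ℝ := t - k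
def P3 (k : ℕ) : ℕ := if k = 0 then 1 else 0
def Q3 (k : ℕ) : ℝ := if k = 0 then 0 else -(k:ℝ)
def Q4 (σ : ℝ) (k : ℕ) : ℝ := if k = 0 then 0 else -σ - k

lemma closure1 {s : ℝ} (hs : -1 ≤ s) (j m : ℕ) :
    Q1 s (j+m+1) < min 0 (s - j) + Q1 s m ∨
      (Q1 s (j+m+1) ≤ min 0 (s - j) + Q1 s m ∧
        (if (j:ℝ) = s then 1 else 0) + P1 s m ≤ P1 s (j+m+1)) := by
  have hj0 : (0:ℝ) ≤ j := Nat.cast_nonneg j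
  have hm0 : (0:ℝ) ≤ m := Nat.cast_nonneg m
  have hQk1 : Q1 s (j+m+1) ≤ 0 := min_le_left _ _
  have hQk2 : Q1 s (j+m+1) ≤ s - (j:ℝ) - m := by
    refine (min_le_right _ _).trans_eq ?_; push_cast; ring
  rcases lt_trichotomy ((j:ℝ)) s with hj | hj | hj <;>
    rcases lt_trichotomy ((m:ℝ)) (s+1) with hm | hm | hm
  -- case 1 : j < s, m < s+1
  · have ea : min 0 (s - (j:ℝ)) = 0 := min_eq_left (by linarith)
    have em : Q1 s m = 0 := by rw [Q1]; exact min_eq_left (by linarith)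
    have ep : (if (j:ℝ) = s then 1 else 0) = 0 := if_neg (ne_of_lt hj)
    have ePm : P1 s m = 0 := by rw [P1]; exact if_neg (fun h => (ne_of_lt hm) h.2)
    exact Or.inr ⟨by rw [ea, em]; linarith, by rw [ep, ePm]; exact Nat.zero_le _⟩
  -- case 2 : j < s, m = s+1
  · have ea : min 0 (s - (j:ℝ)) = 0 := min_eq_left (by linarith)
    have em : Q1 s m = 0 := by rw [Q1]; exact min_eq_left (by linarith)
    exact Or.inl (by rw [ea, em]; linarith)
  -- case 3 : j < s, m > s+1
  · have ea : min 0 (s - (j:ℝ)) = 0 := min_eq_left (by linarith)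
    have em : Q1 s m = s + 1 - m := by rw [Q1]; exact min_eq_right (by linarith)
    exact Or.inl (by rw [ea, em]; linarith)
  -- case 4 : j = s, m < s+1
  · have ea : min 0 (s - (j:ℝ)) = 0 := by rw [hj]; simp
    have em : Q1 s m = 0 := by rw [Q1]; exact min_eq_left (by linarith)
    have ep : (if (j:ℝ) = s then 1 else 0) = 1 := if_pos hj
    rcases Nat.eq_zero_or_pos m with hm' | hm'
    · subst hm'
      have ePm : P1 s 0 = 0 := by rw [P1]; exact if_neg (by simp)
      have ePk : P1 s (j+0+1) = 1 := by
        rw [P1]; exact if_pos ⟨by omega, by push_cast; push_cast at hj; linarith⟩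
      exact Or.inr ⟨by rw [ea, em]; linarith, by rw [ep, ePm, ePk]⟩
    · have hm1 : (1:ℝ) ≤ m := by exact_mod_cast hm'
      exact Or.inl (by rw [ea, em]; linarith)
  -- case 5 : j = s, m = s+1
  · have ea : min 0 (s - (j:ℝ)) = 0 := by rw [hj]; simp
    have em : Q1 s m = 0 := by rw [Q1, hm]; simp
    exact Or.inl (by rw [ea, em]; linarith)
  -- case 6 : j = s, m > s+1
  · have ea : min 0 (s - (j:ℝ)) = 0 := by rw [hj]; simp
    have em : Q1 s m = s + 1 - m := by rw [Q1]; exact min_eq_right (by linarith)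
    exact Or.inl (by rw [ea, em]; linarith)
  -- case 7 : j > s, m < s+1
  · have ea : min 0 (s - (j:ℝ)) = s - j := min_eq_right (by linarith)
    have em : Q1 s m = 0 := by rw [Q1]; exact min_eq_left (by linarith)
    rcases Nat.eq_zero_or_pos m with hm' | hm'
    · subst hm'
      have ePm : P1 s 0 = 0 := by rw [P1]; exact if_neg (by simp)
      have ep : (if (j:ℝ) = s then 1 else 0) = 0 := if_neg (ne_of_gt hj)
      have h0 : ((0:ℕ):ℝ) = 0 := by norm_num
      refine Or.inr ⟨by rw [ea, em]; rw [h0] at hQk2; linarith,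
        by rw [ep, ePm]; exact Nat.zero_le _⟩
    · have hm1 : (1:ℝ) ≤ m := by exact_mod_cast hm'
      exact Or.inl (by rw [ea, em]; linarith)
  -- case 8 : j > s, m = s+1
  · have ea : min 0 (s - (j:ℝ)) = s - j := min_eq_right (by linarith)
    have em : Q1 s m = 0 := by rw [Q1, hm]; simp
    rcases eq_or_lt_of_le hs with hs' | hs'
    · have hm' : m = 0 := by
        have : (m:ℝ) = 0 := by rw [hm, ← hs']; ring
        exact_mod_cast this
      subst hm'
      have ePm : P1 s 0 = 0 := by rw [P1]; exact if_neg (by simp)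
      have ep : (if (j:ℝ) = s then 1 else 0) = 0 := if_neg (ne_of_gt hj)
      have h0 : ((0:ℕ):ℝ) = 0 := by norm_num
      refine Or.inr ⟨by rw [ea, em]; rw [h0] at hQk2; linarith,
        by rw [ep, ePm]; exact Nat.zero_le _⟩
    · have hm1 : (m:ℝ) = s + 1 := hm
      exact Or.inl (by rw [ea, em]; linarith)
  -- case 9 : j > s, m > s+1
  · have ea : min 0 (s - (j:ℝ)) = s - j := min_eq_right (by linarith)
    have em : Q1 s m = s + 1 - m := by rw [Q1]; exact min_eq_right (by linarith)
    rcases eq_or_lt_of_le hs with hs' | hs'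
    · have ep : (if (j:ℝ) = s then 1 else 0) = 0 := if_neg (ne_of_gt hj)
      have ePm : P1 s m = 0 := by rw [P1]; exact if_neg (fun h => (ne_of_gt hm) h.2)
      refine Or.inr ⟨by rw [ea, em]; linarith, by rw [ep, ePm]; exact Nat.zero_le _⟩
    · exact Or.inl (by rw [ea, em]; linarith)

lemma closure2 {s t : ℝ} (hs : -1 ≤ s) (j m : ℕ) :
    Q2 t (j+m+1) < min 0 (s - j) + Q2 t m ∨
      (Q2 t (j+m+1) ≤ min 0 (s - j) + Q2 t m ∧
        (if (j:ℝ) = s then 1 else 0) + 0 ≤ 0) := by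
  have hj0 : (0:ℝ) ≤ j := Nat.cast_nonneg j
  have hk : Q2 t (j+m+1) = t - ((j:ℝ) + m + 1) := by rw [Q2]; push_cast; ring
  rcases lt_trichotomy ((j:ℝ)) s with hj | hj | hj
  · refine Or.inl ?_
    rw [hk, min_eq_left (by linarith : (0:ℝ) ≤ s - j), Q2]
    linarith
  · refine Or.inl ?_
    rw [hk, hj]
    simp only [sub_self, min_self]
    rw [Q2]
    linarith
  · rcases eq_or_lt_of_le hs with hs' | hs'
    · refine Or.inr ⟨?_, ?_⟩
      · rw [hk, min_eq_right (by linarith : s - (j:ℝ) ≤ 0), Q2]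
        linarith
      · rw [if_neg (ne_of_gt hj)]
    · refine Or.inl ?_
      rw [hk, min_eq_right (by linarith : s - (j:ℝ) ≤ 0), Q2]
      linarith

lemma closure3 {s : ℝ} (hs : -1 < s) (j m : ℕ) :
    Q3 (j+m+1) < min 0 (s - j) + Q3 m ∨
      (Q3 (j+m+1) ≤ min 0 (s - j) + Q3 m ∧
        (if (j:ℝ) = s then 1 else 0) + P3 m ≤ P3 (j+m+1)) := by
  have hj0 : (0:ℝ) ≤ j := Nat.cast_nonneg j
  refine Or.inl ?_
  have h1 : -((j:ℝ)) - 1 < min 0 (s - j) := by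
    rcases min_cases (0:ℝ) (s - j) with ⟨h, _⟩ | ⟨h, _⟩ <;> rw [h] <;> linarith
  have h2 : -(m:ℝ) ≤ Q3 m := by
    rw [Q3]; split_ifs with h
    · simp [h]
    · exact le_rfl
  have e : Q3 (j+m+1) = -((j:ℝ) + m + 1) := by
    rw [Q3, if_neg (by omega)]; push_cast; ring
  rw [e]
  linarith

lemma closure4 {σ : ℝ} (hσ : 0 < σ) (j m : ℕ) :
    Q4 σ (j+m+1) < min (0:ℝ) (-1 - (j:ℝ)) + Q4 σ m ∨
      (Q4 σ (j+m+1) ≤ min (0:ℝ) (-1 - (j:ℝ)) + Q4 σ m ∧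
        (if (j:ℝ) = -1 then 1 else 0) + P3 m ≤ P3 (j+m+1)) := by
  have hj0 : (0:ℝ) ≤ j := Nat.cast_nonneg j
  have e0 : min (0:ℝ) (-1 - j) = -1 - j := min_eq_right (by linarith)
  have e : Q4 σ (j+m+1) = -σ - ((j:ℝ) + m + 1) := by
    rw [Q4, if_neg (by omega)]; push_cast; ring
  rcases Nat.eq_zero_or_pos m with hm' | hm'
  · subst hm'
    refine Or.inl ?_
    rw [e, e0, Q4, if_pos rfl]
    push_cast
    linarith
  · refine Or.inr ⟨?_, ?_⟩
    · rw [e, e0, Q4, if_neg (by omega)]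
      linarith
    · rw [if_neg (by intro h; rw [h] at hj0; linarith), P3, if_neg (by omega)]
      exact Nat.zero_le _


/-! ### Converters to the `ZygLoc1` clauses -/

lemma bd_to_const {f : ℝ → ℝ → ℂ} {K : Set ℝ} (h : Bd f (w 0 0) K) :
    ∃ C, ∀ᶠ ε in 𝓝[>] (0:ℝ), ∀ x ∈ K, ‖f ε x‖ ≤ C := by
  obtain ⟨C, _, hC⟩ := h
  exact ⟨C, hC.mono fun ε h1 x hx => by simpa [w] using h1 x hx⟩

lemma bd_to_log {f : ℝ → ℝ → ℂ} {K : Set ℝ} {p : ℕ} (hp : p ≤ 1) (h : Bd f (w p 0) K) :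
    ∃ C, ∀ᶠ ε in 𝓝[>] (0:ℝ), ∀ x ∈ K, ‖f ε x‖ ≤ C * Real.log (1/ε) := by
  obtain ⟨C, _, hC⟩ := h.of_dom (dom_w (Or.inr ⟨le_rfl, hp⟩))
  exact ⟨C, hC.mono fun ε h1 x hx => by simpa [w, LL] using h1 x hx⟩

lemma bd_to_rpow {f : ℝ → ℝ → ℂ} {K : Set ℝ} {r : ℝ} (h : Bd f (w 0 r) K) :
    ∃ C, ∀ᶠ ε in 𝓝[>] (0:ℝ), ∀ x ∈ K, ‖f ε x‖ ≤ C * ε ^ r := by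
  obtain ⟨C, _, hC⟩ := h
  exact ⟨C, hC.mono fun ε h1 x hx => by simpa [w] using h1 x hx⟩

end OdeZyg

/-- regularity of the solution `u_ε(x) = b_ε e^{∫₀ˣ a_ε}` of
`u' = a u`, `u(0) = b`, for `a` of local Zygmund regularity `s ≥ -1` with locally bounded
real part and a generalized constant `b` of Zygmund regularity `t`. -/
theorem ode_zygLoc (s : ℝ) (hs : -1 ≤ s) (a : ℝ → ℝ → ℂ)
    (hasmooth : ∀ ε ∈ Set.Ioc (0:ℝ) 1, ContDiff ℝ (⊤ : ℕ∞) (a ε))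
    (haz : ZygLoc1 s a)
    (hre : ∀ K : Set ℝ, IsCompact K → ∃ C : ℝ, ∃ ε₀ : ℝ, 0 < ε₀ ∧
      ∀ ε : ℝ, 0 < ε → ε < ε₀ → ∀ x ∈ K, |(a ε x).re| ≤ C)
    (t : ℝ) (b : ℝ → ℂ)
    (hbpos : 0 < t → ∃ C, ∀ᶠ ε in 𝓝[>] (0:ℝ), ‖b ε‖ ≤ C)
    (hbzero : t = 0 → ∃ C, ∀ᶠ ε in 𝓝[>] (0:ℝ), ‖b ε‖ ≤ C * Real.log (1/ε))
    (hbneg : t < 0 → ∃ C, ∀ᶠ ε in 𝓝[>] (0:ℝ), ‖b ε‖ ≤ C * ε ^ t)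
    (u : ℝ → ℝ → ℂ)
    (hu : u = fun ε x => b ε * Complex.exp (∫ y in (0:ℝ)..x, a ε y)) :
    (0 < t → ZygLoc1 (s + 1) u) ∧
    (t < 0 → ZygLoc1 t u) ∧
    (t = 0 → (-1 < s → ZygLoc1 0 u) ∧ (s = -1 → ∀ σ > (0:ℝ), ZygLoc1 (-σ) u)) := by
  subst hu
  refine ⟨?_, ?_, ?_⟩
  · -- regime 1 : 0 < t, order s + 1
    intro ht K hK k
    have hb : ∃ C, 0 ≤ C ∧ ∀ᶠ ε in 𝓝[>] (0:ℝ),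
        ‖b ε‖ ≤ C * OdeZyg.w (OdeZyg.P1 s 0) (OdeZyg.Q1 s 0) ε := by
      obtain ⟨C, hC⟩ := hbpos ht
      have e1 : OdeZyg.P1 s 0 = 0 := by rw [OdeZyg.P1]; exact if_neg (by simp)
      have e2 : OdeZyg.Q1 s 0 = 0 := by
        rw [OdeZyg.Q1]; push_cast; exact min_eq_left (by linarith)
      refine ⟨max C 0, le_max_right _ _, ?_⟩
      filter_upwards [hC] with ε h1
      rw [e1, e2, OdeZyg.w, pow_zero, Real.rpow_zero, mul_one, mul_one]
      exact h1.trans (le_max_left _ _)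
    have hm := OdeZyg.master hasmooth haz hre (OdeZyg.P1 s) (OdeZyg.Q1 s) hb
      (fun j m => OdeZyg.closure1 hs j m) hK
    refine ⟨?_, ?_, ?_⟩
    · intro hk
      have e1 : OdeZyg.P1 s k = 0 := by
        rw [OdeZyg.P1]; exact if_neg (fun h => by linarith [h.2])
      have e2 : OdeZyg.Q1 s k = 0 := by rw [OdeZyg.Q1]; exact min_eq_left (by linarith)
      have h := hm k; rw [e1, e2] at h
      exact OdeZyg.bd_to_const h
    · intro hk
      have e2 : OdeZyg.Q1 s k = 0 := by rw [OdeZyg.Q1, hk]; simp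
      have h := hm k; rw [e2] at h
      refine OdeZyg.bd_to_log ?_ h
      rw [OdeZyg.P1]; split_ifs <;> omega
    · intro hk
      have e1 : OdeZyg.P1 s k = 0 := by
        rw [OdeZyg.P1]; exact if_neg (fun h => by linarith [h.2])
      have e2 : OdeZyg.Q1 s k = s + 1 - k := by
        rw [OdeZyg.Q1]; exact min_eq_right (by linarith)
      have h := hm k; rw [e1, e2] at h
      exact OdeZyg.bd_to_rpow h
  · -- regime 2 : t < 0, order t
    intro ht K hK k
    have hb : ∃ C, 0 ≤ C ∧ ∀ᶠ ε in 𝓝[>] (0:ℝ),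
        ‖b ε‖ ≤ C * OdeZyg.w 0 (OdeZyg.Q2 t 0) ε := by
      obtain ⟨C, hC⟩ := hbneg ht
      have e2 : OdeZyg.Q2 t 0 = t := by rw [OdeZyg.Q2]; push_cast; ring
      refine ⟨max C 0, le_max_right _ _, ?_⟩
      filter_upwards [hC, OdeZyg.ev_Ioo one_pos] with ε h1 h2
      rw [e2, OdeZyg.w, pow_zero, one_mul]
      exact h1.trans (mul_le_mul_of_nonneg_right (le_max_left _ _)
        (Real.rpow_nonneg h2.1.le _))
    have hm := OdeZyg.master hasmooth haz hre (fun _ => 0) (OdeZyg.Q2 t) hb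
      (fun j m => OdeZyg.closure2 hs j m) hK
    refine ⟨?_, ?_, ?_⟩
    · intro hk; exfalso
      have : (0:ℝ) ≤ k := Nat.cast_nonneg k; linarith
    · intro hk; exfalso
      have : (0:ℝ) ≤ k := Nat.cast_nonneg k; linarith
    · intro _
      have h := hm k
      have e2 : OdeZyg.Q2 t k = t - (k:ℝ) := rfl
      rw [e2] at h
      exact OdeZyg.bd_to_rpow h
  · -- regime 3/4 : t = 0
    intro ht
    constructor
    · -- -1 < s, order 0
      intro hs' K hK k
      have hb : ∃ C, 0 ≤ C ∧ ∀ᶠ ε in 𝓝[>] (0:ℝ),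
          ‖b ε‖ ≤ C * OdeZyg.w (OdeZyg.P3 0) (OdeZyg.Q3 0) ε := by
        obtain ⟨C, hC⟩ := hbzero ht
        refine ⟨max C 0, le_max_right _ _, ?_⟩
        filter_upwards [hC, OdeZyg.LL_ge_one] with ε h1 h2
        have e : OdeZyg.w (OdeZyg.P3 0) (OdeZyg.Q3 0) ε = OdeZyg.LL ε := by
          rw [OdeZyg.P3, OdeZyg.Q3, if_pos rfl, if_pos rfl, OdeZyg.w, pow_one,
            Real.rpow_zero, mul_one]
        rw [e]
        calc ‖b ε‖ ≤ C * Real.log (1/ε) := h1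
          _ ≤ max C 0 * OdeZyg.LL ε := by
            have h2' : (1:ℝ) ≤ Real.log (1/ε) := h2
            exact mul_le_mul_of_nonneg_right (le_max_left _ _) (by linarith)
      have hm := OdeZyg.master hasmooth haz hre OdeZyg.P3 OdeZyg.Q3 hb
        (fun j m => OdeZyg.closure3 hs' j m) hK
      refine ⟨?_, ?_, ?_⟩
      · intro hk; exfalso
        have : (0:ℝ) ≤ k := Nat.cast_nonneg k; linarith
      · intro hk
        have hk0 : k = 0 := by exact_mod_cast hk
        subst hk0
        have h := hm 0
        have e1 : OdeZyg.P3 0 = 1 := by simp [OdeZyg.P3]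
        have e2 : OdeZyg.Q3 0 = 0 := by simp [OdeZyg.Q3]
        rw [e1, e2] at h
        exact OdeZyg.bd_to_log le_rfl h
      · intro hk
        have hk0 : k ≠ 0 := by
          intro h0; rw [h0] at hk; norm_num at hk
        have h := hm k
        have e1 : OdeZyg.P3 k = 0 := by rw [OdeZyg.P3]; exact if_neg hk0
        have e2 : OdeZyg.Q3 k = 0 - (k:ℝ) := by rw [OdeZyg.Q3, if_neg hk0]; ring
        rw [e1, e2] at h
        exact OdeZyg.bd_to_rpow h
    · -- s = -1, order -σ
      intro hs' σ hσ K hK k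
      subst hs'
      have hb : ∃ C, 0 ≤ C ∧ ∀ᶠ ε in 𝓝[>] (0:ℝ),
          ‖b ε‖ ≤ C * OdeZyg.w (OdeZyg.P3 0) (OdeZyg.Q4 σ 0) ε := by
        obtain ⟨C, hC⟩ := hbzero ht
        refine ⟨max C 0, le_max_right _ _, ?_⟩
        filter_upwards [hC, OdeZyg.LL_ge_one] with ε h1 h2
        have e : OdeZyg.w (OdeZyg.P3 0) (OdeZyg.Q4 σ 0) ε = OdeZyg.LL ε := by
          rw [OdeZyg.P3, OdeZyg.Q4, if_pos rfl, if_pos rfl, OdeZyg.w, pow_one,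
            Real.rpow_zero, mul_one]
        rw [e]
        calc ‖b ε‖ ≤ C * Real.log (1/ε) := h1
          _ ≤ max C 0 * OdeZyg.LL ε := by
            have h2' : (1:ℝ) ≤ Real.log (1/ε) := h2
            exact mul_le_mul_of_nonneg_right (le_max_left _ _) (by linarith)
      have hm := OdeZyg.master hasmooth haz hre OdeZyg.P3 (OdeZyg.Q4 σ) hb
        (fun j m => OdeZyg.closure4 hσ j m) hK
      refine ⟨?_, ?_, ?_⟩
      · intro hk; exfalso
        have : (0:ℝ) ≤ k := Nat.cast_nonneg k; linarith
      · intro hk; exfalso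
        have : (0:ℝ) ≤ k := Nat.cast_nonneg k; linarith
      · intro _
        rcases Nat.eq_zero_or_pos k with hk0 | hk0
        · subst hk0
          have h := hm 0
          have e1 : OdeZyg.P3 0 = 1 := by simp [OdeZyg.P3]
          have e2 : OdeZyg.Q4 σ 0 = 0 := by simp [OdeZyg.Q4]
          rw [e1, e2] at h
          have h2 := h.of_dom (OdeZyg.dom_w (p := 1) (q := 0) (p' := 0)
            (q' := -σ - ((0:ℕ):ℝ)) (Or.inl (by push_cast; linarith)))
          exact OdeZyg.bd_to_rpow h2
        · have h := hm k
          have e1 : OdeZyg.P3 k = 0 := by rw [OdeZyg.P3]; exact if_neg (by omega)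
          have e2 : OdeZyg.Q4 σ k = -σ - (k:ℝ) := by rw [OdeZyg.Q4, if_neg (by omega)]
          rw [e1, e2] at h
          exact OdeZyg.bd_to_rpow h
end
end
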